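/- arXiv:1810.03180 — 4 statements merged into one kernel-verified Lean document; each statement's English description precedes it below -/
import Mathlib

section
/- Uniform Hadamard directional differentiability of LP value functions (Theorem 3.1, in LP-data form). Let Θ ⊆ ℝ^d be nonempty, convex and compact, and let p = (E, f, A, b, c) be LP data such that p is ε-κ-regular for some ε > 0 and κ > 0. Let (θ*(p), μ*(p), λ*(p)) be the (unique) KKT point for the minimization problem at p, and (θ̄*(p), μ̄*(p), λ̄*(p)) the (unique) KKT point for the maximization problem at p. Then for every sequence of LP data pₙ with ‖pₙ − p‖ → 0, every sequence of positive reals tₙ with tₙ → 0, and every sequence of data directions qₙ = (ΔEₙ, Δfₙ, ΔAₙ, Δbₙ, Δcₙ) converging to q = (ΔE, Δf, ΔA, Δb, Δc), one has lim_{n→∞} [V(pₙ + tₙ qₙ) − V(pₙ)]/tₙ = Δc·θ*(p) + μ*(p)·(ΔE θ*(p) − Δf) + Σ_{j=1}^{r₂} λ*_j(p)·(ΔA_j θ*(p) − Δb_j), and lim_{n→∞} [V̄(pₙ + tₙ qₙ) − V̄(pₙ)]/tₙ = Δc·θ̄*(p) − μ̄*(p)·(ΔE θ̄*(p) − Δf)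 − Σ_{j=1}^{r₂} λ̄*_j(p)·(ΔA_j θ̄*(p) − Δb_j). (For n large enough, pₙ and pₙ + tₙqₙ lie in the ε-ball around p, so both value functions are finite along the sequences.) -/
open Filter Topology

/-- Linear-program data `p = (E, f, A, b, c)`: an `r₁ × d` matrix `E`, a vector `f ∈ ℝ^{r₁}`,
an `r₂ × d` matrix `A`, a vector `b ∈ ℝ^{r₂}`, and an objective vector `c ∈ ℝ^d`.
The data space carries the product/sup norm. -/
abbrev LPData (d r₁ r₂ : ℕ) : Type :=
  (Fin r₁ → Fin d → ℝ) × (Fin r₁ → ℝ) × (Fin r₂ → Fin d → ℝ) × (Fin r₂ → ℝ) × (Fin d → ℝ)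

variable {d r₁ r₂ : ℕ}

def lpE (p : LPData d r₁ r₂) : Fin r₁ → Fin d → ℝ := p.1
def lpf (p : LPData d r₁ r₂) : Fin r₁ → ℝ := p.2.1
def lpA (p : LPData d r₁ r₂) : Fin r₂ → Fin d → ℝ := p.2.2.1
def lpb (p : LPData d r₁ r₂) : Fin r₂ → ℝ := p.2.2.2.1
def lpc (p : LPData d r₁ r₂) : Fin d → ℝ := p.2.2.2.2

/-- Euclidean dot product on `ℝ^n`. -/
def dotp {n : ℕ} (x y : Fin n → ℝ) : ℝ := ∑ i, x i * y i

/-- The feasible set `Θ_I(p) = {θ ∈ Θ : Eθ = f, Aθ ≤ b}`. -/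
def feasSet (Θ : Set (Fin d → ℝ)) (p : LPData d r₁ r₂) : Set (Fin d → ℝ) :=
  {θ | θ ∈ Θ ∧ (∀ i, dotp (lpE p i) θ = lpf p i) ∧ ∀ j, dotp (lpA p j) θ ≤ lpb p j}

/-- Lower value function `V(p) = inf {c·θ : θ ∈ Θ_I(p)}`. -/
noncomputable def lowVal (Θ : Set (Fin d → ℝ)) (p : LPData d r₁ r₂) : ℝ :=
  sInf ((fun θ => dotp (lpc p) θ) '' feasSet Θ p)

/-- Upper value function `V̄(p) = sup {c·θ : θ ∈ Θ_I(p)}`. -/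
noncomputable def upVal (Θ : Set (Fin d → ℝ)) (p : LPData d r₁ r₂) : ℝ :=
  sSup ((fun θ => dotp (lpc p) θ) '' feasSet Θ p)

/-- `θs` is an optimal solution of the minimization problem at `p`. -/
def IsOptMin (Θ : Set (Fin d → ℝ)) (p : LPData d r₁ r₂) (θs : Fin d → ℝ) : Prop :=
  θs ∈ feasSet Θ p ∧ ∀ θ ∈ feasSet Θ p, dotp (lpc p) θs ≤ dotp (lpc p) θ

/-- `θs` is an optimal solution of the maximization problem at `p`. -/
def IsOptMax (Θ : Set (Fin d → ℝ)) (p : LPData d r₁ r₂) (θs : Fin d → ℝ) : Prop :=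
  θs ∈ feasSet Θ p ∧ ∀ θ ∈ feasSet Θ p, dotp (lpc p) θ ≤ dotp (lpc p) θs

/-- LICQ at the feasible point `θs` with constant `κ > 0`: the matrix `G` obtained by stacking
the rows of `E` and the active rows of `A` satisfies `min eig (GGᵀ) ≥ κ`, expressed via the
quadratic form: `‖Gᵀv‖² ≥ κ‖v‖²` for every vector `v = (μ, λ)` with `λ` supported on the
active inequality constraints. -/
def LICQ (p : LPData d r₁ r₂) (θs : Fin d → ℝ) (κ : ℝ) : Prop :=
  ∀ (μ : Fin r₁ → ℝ) (lam : Fin r₂ → ℝ),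
    (∀ j, dotp (lpA p j) θs ≠ lpb p j → lam j = 0) →
    κ * ((∑ i, μ i ^ 2) + ∑ j, lam j ^ 2) ≤
      ∑ x, ((∑ i, μ i * lpE p i x) + ∑ j, lam j * lpA p j x) ^ 2

/-- KKT point for the minimization problem at `p`. -/
def IsKKTMin (Θ : Set (Fin d → ℝ)) (p : LPData d r₁ r₂)
    (θs : Fin d → ℝ) (μ : Fin r₁ → ℝ) (lam : Fin r₂ → ℝ) : Prop :=
  θs ∈ feasSet Θ p ∧ θs ∈ interior Θ ∧ (∀ j, 0 ≤ lam j) ∧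
    (∀ j, lam j * (dotp (lpA p j) θs - lpb p j) = 0) ∧
    ∀ x, lpc p x + (∑ i, μ i * lpE p i x) + (∑ j, lam j * lpA p j x) = 0

/-- KKT point for the maximization problem at `p` (stationarity `−c + Eᵀμ + Aᵀλ = 0`). -/
def IsKKTMax (Θ : Set (Fin d → ℝ)) (p : LPData d r₁ r₂)
    (θs : Fin d → ℝ) (μ : Fin r₁ → ℝ) (lam : Fin r₂ → ℝ) : Prop :=
  θs ∈ feasSet Θ p ∧ θs ∈ interior Θ ∧ (∀ j, 0 ≤ lam j) ∧
    (∀ j, lam j * (dotp (lpA p j) θs - lpb p j) = 0) ∧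
    ∀ x, -lpc p x + (∑ i, μ i * lpE p i x) + (∑ j, lam j * lpA p j x) = 0

/-- `p` is `ε`-`κ`-regular: for every LP data `p'` in the `ε`-ball around `p`, the feasible
set is nonempty and both the minimization and maximization problems have unique optimal
solutions lying in the interior of `Θ` at which LICQ holds with constant `κ`. -/
def Regular (Θ : Set (Fin d → ℝ)) (p : LPData d r₁ r₂) (ε κ : ℝ) : Prop :=
  ∀ p' : LPData d r₁ r₂, ‖p' - p‖ ≤ ε →
    (feasSet Θ p').Nonempty ∧
    (∃ θm, IsOptMin Θ p' θm ∧ (∀ θ, IsOptMin Θ p' θ → θ = θm) ∧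
      θm ∈ interior Θ ∧ LICQ p' θm κ) ∧
    (∃ θM, IsOptMax Θ p' θM ∧ (∀ θ, IsOptMax Θ p' θ → θ = θM) ∧
      θM ∈ interior Θ ∧ LICQ p' θM κ)

section Aux
variable {d r₁ r₂ : ℕ}

lemma dotp_comm {n : ℕ} (a b : Fin n → ℝ) : dotp a b = dotp b a :=
  Finset.sum_congr rfl fun x _ => mul_comm _ _

lemma dotp_fun_add {n : ℕ} (a u v : Fin n → ℝ) :
    dotp a (fun x => u x + v x) = dotp a u + dotp a v := by
  simp [dotp, mul_add, Finset.sum_add_distrib]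

lemma dotp_fun_sub {n : ℕ} (a u v : Fin n → ℝ) :
    dotp a (fun x => u x - v x) = dotp a u - dotp a v := by
  simp [dotp, mul_sub, Finset.sum_sub_distrib]

lemma dotp_fun_neg {n : ℕ} (a u : Fin n → ℝ) : dotp a (fun x => -u x) = -dotp a u := by
  simp [dotp]

lemma dotp_fun_mul {n : ℕ} (a u : Fin n → ℝ) (c : ℝ) :
    dotp a (fun x => c * u x) = c * dotp a u := by
  simp only [dotp, Finset.mul_sum]; exact Finset.sum_congr rfl fun x _ => by ring

lemma dotp_fun_sum {n : ℕ} {ι : Type*} [Fintype ι] (a : Fin n → ℝ) (c : ι → ℝ)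
    (v : ι → Fin n → ℝ) :
    dotp a (fun x => ∑ k, c k * v k x) = ∑ k, c k * dotp a (v k) := by
  simp only [dotp, Finset.mul_sum]
  rw [Finset.sum_comm]
  exact Finset.sum_congr rfl fun k _ => Finset.sum_congr rfl fun x _ => by ring

/-- The combination `x ↦ Σ μᵢ Eᵢₓ + Σ λⱼ Aⱼₓ`. -/
def comb (p : LPData d r₁ r₂) (μ : Fin r₁ → ℝ) (lam : Fin r₂ → ℝ) : Fin d → ℝ :=
  fun x => (∑ i, μ i * lpE p i x) + ∑ j, lam j * lpA p j x

lemma dotp_comb_right (p : LPData d r₁ r₂) (a : Fin d → ℝ) (μ : Fin r₁ → ℝ) (lam : Fin r₂ → ℝ) :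
    dotp a (comb p μ lam) = (∑ i, μ i * dotp a (lpE p i)) + ∑ j, lam j * dotp a (lpA p j) := by
  rw [show comb p μ lam
      = fun x => (fun y => ∑ i, μ i * lpE p i y) x + (fun y => ∑ j, lam j * lpA p j y) x from rfl,
    dotp_fun_add, dotp_fun_sum, dotp_fun_sum]

lemma dotp_comb_left (p : LPData d r₁ r₂) (a : Fin d → ℝ) (μ : Fin r₁ → ℝ) (lam : Fin r₂ → ℝ) :
    dotp (comb p μ lam) a = (∑ i, μ i * dotp (lpE p i) a) + ∑ j, lam j * dotp (lpA p j) a := by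
  rw [dotp_comm, dotp_comb_right]
  simp only [dotp_comm a]

lemma sum_sq_eq_dotp {n : ℕ} (v : Fin n → ℝ) : ∑ x, v x ^ 2 = dotp v v := by
  simp [dotp, sq]

-- definitional entry tests
example (a b : LPData d r₁ r₂) (i : Fin r₁) (x : Fin d) :
    lpE (a - b) i x = lpE a i x - lpE b i x := rfl
example (a b : LPData d r₁ r₂) (i : Fin r₁) : lpf (a - b) i = lpf a i - lpf b i := rfl
example (a b : LPData d r₁ r₂) (j : Fin r₂) (x : Fin d) :
    lpA (a - b) j x = lpA a j x - lpA b j x := rfl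
example (a b : LPData d r₁ r₂) (j : Fin r₂) : lpb (a - b) j = lpb a j - lpb b j := rfl
example (a b : LPData d r₁ r₂) (x : Fin d) : lpc (a - b) x = lpc a x - lpc b x := rfl
example (a b : LPData d r₁ r₂) (t : ℝ) (x : Fin d) :
    lpc (a + t • b) x = lpc a x + t * lpc b x := rfl
example (a b : LPData d r₁ r₂) (t : ℝ) (i : Fin r₁) (x : Fin d) :
    lpE (a + t • b) i x = lpE a i x + t * lpE b i x := rfl
example (a b : LPData d r₁ r₂) (t : ℝ) (i : Fin r₁) : lpf (a + t • b) i = lpf a i + t * lpf b i := rfl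
example (a b : LPData d r₁ r₂) (t : ℝ) (j : Fin r₂) (x : Fin d) :
    lpA (a + t • b) j x = lpA a j x + t * lpA b j x := rfl
example (a b : LPData d r₁ r₂) (t : ℝ) (j : Fin r₂) : lpb (a + t • b) j = lpb a j + t * lpb b j := rfl

end Aux
section Solve
open Classical in
/-- Projection of a multiplier vector onto the active constraints at `θ`. -/
noncomputable def projAct (p : LPData d r₁ r₂) (θ : Fin d → ℝ) (lam : Fin r₂ → ℝ) :
    Fin r₂ → ℝ :=
  fun j => if dotp (lpA p j) θ = lpb p j then lam j else 0

variable {d r₁ r₂ : ℕ}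

open Classical in
/-- The "Gram-type" endomorphism used to solve linear systems given LICQ. -/
noncomputable def Tmap (p : LPData d r₁ r₂) (θ : Fin d → ℝ) :
    ((Fin r₁ → ℝ) × (Fin r₂ → ℝ)) →ₗ[ℝ] ((Fin r₁ → ℝ) × (Fin r₂ → ℝ)) where
  toFun v := (fun i => dotp (lpE p i) (comb p v.1 (projAct p θ v.2)),
    fun j => if dotp (lpA p j) θ = lpb p j then
      dotp (lpA p j) (comb p v.1 (projAct p θ v.2)) else v.2 j)
  map_add' u v := by
    classical
    have hz : comb p (u + v).1 (projAct p θ (u + v).2)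
        = fun x => comb p u.1 (projAct p θ u.2) x + comb p v.1 (projAct p θ v.2) x := by
      funext x
      simp only [comb, projAct, Prod.fst_add, Prod.snd_add, Pi.add_apply]
      rw [Finset.sum_congr rfl (fun i _ => add_mul (u.1 i) (v.1 i) (lpE p i x)),
        Finset.sum_congr rfl (fun j (_ : j ∈ Finset.univ) =>
          show (if dotp (lpA p j) θ = lpb p j then u.2 j + v.2 j else 0) * lpA p j x
              = (if dotp (lpA p j) θ = lpb p j then u.2 j else 0) * lpA p j x
                + (if dotp (lpA p j) θ = lpb p j then v.2 j else 0) * lpA p j x from by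
            split_ifs <;> ring),
        Finset.sum_add_distrib, Finset.sum_add_distrib]
      ring
    refine Prod.ext ?_ ?_
    · funext i
      show dotp (lpE p i) (comb p (u + v).1 (projAct p θ (u + v).2)) = _
      rw [hz, dotp_fun_add]
      rfl
    · funext j
      show (if dotp (lpA p j) θ = lpb p j then _ else (u + v).2 j) = _
      by_cases h : dotp (lpA p j) θ = lpb p j
      · simp only [h, if_pos, if_true]
        rw [hz, dotp_fun_add]
        simp [h]
      · simp [h]
  map_smul' c v := by
    classical
    have hz : comb p (c • v).1 (projAct p θ (c • v).2)
        = fun x => c * comb p v.1 (projAct p θ v.2) x := by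
      funext x
      simp only [comb, projAct, Prod.smul_fst, Prod.smul_snd, Pi.smul_apply, smul_eq_mul]
      rw [mul_add, Finset.mul_sum, Finset.mul_sum]
      congr 1
      · exact Finset.sum_congr rfl fun i _ => by ring
      · exact Finset.sum_congr rfl fun j _ => by split_ifs <;> ring
    refine Prod.ext ?_ ?_
    · funext i
      show dotp (lpE p i) (comb p (c • v).1 (projAct p θ (c • v).2)) = _
      rw [hz, dotp_fun_mul]
      rfl
    · funext j
      show (if dotp (lpA p j) θ = lpb p j then _ else (c • v).2 j) = _
      by_cases h : dotp (lpA p j) θ = lpb p j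
      · simp only [h, if_true]
        rw [hz, dotp_fun_mul]
        simp [h]
      · simp [h]

lemma Tmap_injective (p : LPData d r₁ r₂) (θ : Fin d → ℝ) {κ : ℝ} (hκ : 0 < κ)
    (hlicq : LICQ p θ κ) : Function.Injective (Tmap p θ) := by
  classical
  rw [← LinearMap.ker_eq_bot, LinearMap.ker_eq_bot']
  intro v hv
  have h1 : ∀ i, dotp (lpE p i) (comb p v.1 (projAct p θ v.2)) = 0 :=
    fun i => congrFun (congrArg Prod.fst hv) i
  have h2 : ∀ j, (if dotp (lpA p j) θ = lpb p j then
      dotp (lpA p j) (comb p v.1 (projAct p θ v.2)) else v.2 j) = 0 :=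
    fun j => congrFun (congrArg Prod.snd hv) j
  have hoff : ∀ j, dotp (lpA p j) θ ≠ lpb p j → v.2 j = 0 := by
    intro j hj
    have := h2 j
    rwa [if_neg hj] at this
  have hproj : projAct p θ v.2 = v.2 := by
    funext j
    by_cases h : dotp (lpA p j) θ = lpb p j
    · simp [projAct, h]
    · simp [projAct, h, hoff j h]
  rw [hproj] at h1 h2
  set z := comb p v.1 v.2 with hzdef
  have hzz : dotp z z = 0 := by
    rw [hzdef, dotp_comb_left]
    rw [Finset.sum_eq_zero fun i _ => by rw [h1 i, mul_zero],
      Finset.sum_eq_zero fun j _ => ?_, add_zero]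
    by_cases h : dotp (lpA p j) θ = lpb p j
    · have := h2 j
      rw [if_pos h] at this
      rw [this, mul_zero]
    · rw [hoff j h, zero_mul]
  have hlic := hlicq v.1 v.2 hoff
  have hrhs : ∑ x, ((∑ i, v.1 i * lpE p i x) + ∑ j, v.2 j * lpA p j x) ^ 2 = 0 := by
    have h := (sum_sq_eq_dotp z).trans hzz
    exact h
  rw [hrhs] at hlic
  have hs1 : (0:ℝ) ≤ ∑ i, v.1 i ^ 2 := Finset.sum_nonneg fun i _ => sq_nonneg _
  have hs2 : (0:ℝ) ≤ ∑ j, v.2 j ^ 2 := Finset.sum_nonneg fun j _ => sq_nonneg _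
  have hsum1 : ∑ i, v.1 i ^ 2 = 0 := by nlinarith
  have hsum2 : ∑ j, v.2 j ^ 2 = 0 := by nlinarith
  have e1 : v.1 = 0 := by
    funext i
    have := (Finset.sum_eq_zero_iff_of_nonneg (fun i _ => sq_nonneg (v.1 i))).mp hsum1 i
      (Finset.mem_univ i)
    exact (pow_eq_zero_iff two_ne_zero).mp this
  have e2 : v.2 = 0 := by
    funext j
    have := (Finset.sum_eq_zero_iff_of_nonneg (fun j _ => sq_nonneg (v.2 j))).mp hsum2 j
      (Finset.mem_univ j)
    exact (pow_eq_zero_iff two_ne_zero).mp this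
  exact Prod.ext e1 e2

lemma solve_rows (p : LPData d r₁ r₂) (θ : Fin d → ℝ) {κ : ℝ} (hκ : 0 < κ)
    (hlicq : LICQ p θ κ) (y : Fin r₁ → ℝ) (w : Fin r₂ → ℝ) :
    ∃ (μ : Fin r₁ → ℝ) (lam : Fin r₂ → ℝ),
      (∀ j, dotp (lpA p j) θ ≠ lpb p j → lam j = 0) ∧
      (∀ i, dotp (lpE p i) (comb p μ lam) = y i) ∧
      (∀ j, dotp (lpA p j) θ = lpb p j → dotp (lpA p j) (comb p μ lam) = w j) := by
  classical
  have hsurj : Function.Surjective (Tmap p θ) :=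
    LinearMap.injective_iff_surjective.mp (Tmap_injective p θ hκ hlicq)
  obtain ⟨v, hv⟩ := hsurj (y, w)
  refine ⟨v.1, projAct p θ v.2, fun j hj => by simp [projAct, hj], ?_, ?_⟩
  · intro i
    exact congrFun (congrArg Prod.fst hv) i
  · intro j hj
    have h : (if dotp (lpA p j) θ = lpb p j then
        dotp (lpA p j) (comb p v.1 (projAct p θ v.2)) else v.2 j) = w j :=
      congrFun (congrArg Prod.snd hv) j
    rwa [if_pos hj] at h

end Solve
section KKT
variable {d r₁ r₂ : ℕ}

lemma dotp_stat {p₁ : LPData d r₁ r₂} {μ : Fin r₁ → ℝ} {lam : Fin r₂ → ℝ}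
    (hstat : ∀ x, lpc p₁ x + (∑ i, μ i * lpE p₁ i x) + (∑ j, lam j * lpA p₁ j x) = 0)
    (θ' : Fin d → ℝ) :
    dotp (lpc p₁) θ' = -((∑ i, μ i * dotp (lpE p₁ i) θ') + ∑ j, lam j * dotp (lpA p₁ j) θ') := by
  have hc : lpc p₁ = fun x => -(comb p₁ μ lam x) := by
    funext x
    have := hstat x
    simp only [comb]
    linarith
  rw [hc, dotp_comm, dotp_fun_neg, dotp_comb_right]
  simp only [dotp_comm θ']

lemma key_ineq (Θ : Set (Fin d → ℝ)) (p₁ p₂ : LPData d r₁ r₂) (θ₁ θ₂ : Fin d → ℝ)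
    (μ : Fin r₁ → ℝ) (lam : Fin r₂ → ℝ)
    (hE1 : ∀ i, dotp (lpE p₁ i) θ₁ = lpf p₁ i)
    (hcomp : ∀ j, lam j * (dotp (lpA p₁ j) θ₁ - lpb p₁ j) = 0)
    (hstat : ∀ x, lpc p₁ x + (∑ i, μ i * lpE p₁ i x) + (∑ j, lam j * lpA p₁ j x) = 0)
    (hlam : ∀ j, 0 ≤ lam j)
    (hθ₂ : θ₂ ∈ feasSet Θ p₂) :
    (∑ i, μ i * ((dotp (lpE p₂ i) θ₂ - dotp (lpE p₁ i) θ₂) - (lpf p₂ i - lpf p₁ i)))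
      + ∑ j, lam j * ((dotp (lpA p₂ j) θ₂ - dotp (lpA p₁ j) θ₂) - (lpb p₂ j - lpb p₁ j))
      ≤ dotp (lpc p₁) θ₂ - dotp (lpc p₁) θ₁ := by
  have e1 : dotp (lpc p₁) θ₁ = -((∑ i, μ i * lpf p₁ i) + ∑ j, lam j * lpb p₁ j) := by
    rw [dotp_stat hstat θ₁]
    congr 1
    congr 1
    · exact Finset.sum_congr rfl fun i _ => by rw [hE1 i]
    · exact Finset.sum_congr rfl fun j _ => by linear_combination hcomp j
  have e2 := dotp_stat hstat θ₂
  have hμeq : (∑ i, μ i * ((dotp (lpE p₂ i) θ₂ - dotp (lpE p₁ i) θ₂) - (lpf p₂ i - lpf p₁ i)))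
      = ∑ i, μ i * (lpf p₁ i - dotp (lpE p₁ i) θ₂) :=
    Finset.sum_congr rfl fun i _ => by rw [hθ₂.2.1 i]; ring
  have hle : (∑ j, lam j * ((dotp (lpA p₂ j) θ₂ - dotp (lpA p₁ j) θ₂) - (lpb p₂ j - lpb p₁ j)))
      ≤ ∑ j, lam j * (lpb p₁ j - dotp (lpA p₁ j) θ₂) :=
    Finset.sum_le_sum fun j _ =>
      mul_le_mul_of_nonneg_left (by linarith [hθ₂.2.2 j]) (hlam j)
  have hfin : (∑ i, μ i * (lpf p₁ i - dotp (lpE p₁ i) θ₂))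
      + ∑ j, lam j * (lpb p₁ j - dotp (lpA p₁ j) θ₂)
      = dotp (lpc p₁) θ₂ - dotp (lpc p₁) θ₁ := by
    rw [e1, e2]
    simp only [mul_sub, Finset.sum_sub_distrib]
    ring
  rw [hμeq]
  linarith

lemma kkt_isOptMin (Θ : Set (Fin d → ℝ)) (p₁ : LPData d r₁ r₂) (θ₁ : Fin d → ℝ)
    (μ : Fin r₁ → ℝ) (lam : Fin r₂ → ℝ)
    (hfeas : θ₁ ∈ feasSet Θ p₁)
    (hcomp : ∀ j, lam j * (dotp (lpA p₁ j) θ₁ - lpb p₁ j) = 0)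
    (hstat : ∀ x, lpc p₁ x + (∑ i, μ i * lpE p₁ i x) + (∑ j, lam j * lpA p₁ j x) = 0)
    (hlam : ∀ j, 0 ≤ lam j) : IsOptMin Θ p₁ θ₁ := by
  refine ⟨hfeas, fun θ hθ => ?_⟩
  have h := key_ineq Θ p₁ p₁ θ₁ θ μ lam hfeas.2.1 hcomp hstat hlam hθ
  simp only [sub_self, mul_zero, Finset.sum_const_zero, add_zero, zero_sub, mul_neg] at h
  linarith

open Filter Topology in
lemma feasdir (Θ : Set (Fin d → ℝ)) (p' : LPData d r₁ r₂) (θ : Fin d → ℝ)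
    (hopt : IsOptMin Θ p' θ) (hint : θ ∈ interior Θ) (h : Fin d → ℝ)
    (heq : ∀ i, dotp (lpE p' i) h = 0)
    (hin : ∀ j, dotp (lpA p' j) θ = lpb p' j → dotp (lpA p' j) h ≤ 0) :
    0 ≤ dotp (lpc p') h := by
  have hdot : ∀ (a : Fin d → ℝ) (s : ℝ), dotp a (θ + s • h) = dotp a θ + s * dotp a h := by
    intro a s
    rw [show θ + s • h = fun x => θ x + (fun y => s * h y) x from rfl, dotp_fun_add, dotp_fun_mul]
  have hcont : Continuous (fun s : ℝ => θ + s • h) := by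
    apply Continuous.add continuous_const
    exact continuous_id.smul continuous_const
  have hΘev : ∀ᶠ s in 𝓝 (0:ℝ), θ + s • h ∈ Θ := by
    have hmem : interior Θ ∈ 𝓝 (θ + (0:ℝ) • h) := by
      rw [show θ + (0:ℝ) • h = θ by simp]
      exact isOpen_interior.mem_nhds hint
    filter_upwards [hcont.continuousAt.preimage_mem_nhds hmem] with s hs
    exact interior_subset hs
  have hineq : ∀ j : Fin r₂, ∀ᶠ s in 𝓝[>] (0:ℝ), dotp (lpA p' j) (θ + s • h) ≤ lpb p' j := by
    intro j
    by_cases hact : dotp (lpA p' j) θ = lpb p' j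
    · filter_upwards [self_mem_nhdsWithin] with s hs
      have hs' : (0:ℝ) < s := hs
      rw [hdot, hact]
      nlinarith [hin j hact]
    · have hlt : dotp (lpA p' j) θ < lpb p' j := lt_of_le_of_ne (hopt.1.2.2 j) hact
      have htd : Tendsto (fun s : ℝ => dotp (lpA p' j) (θ + s • h)) (𝓝 0)
          (𝓝 (dotp (lpA p' j) θ)) := by
        rw [show (fun s : ℝ => dotp (lpA p' j) (θ + s • h))
            = fun s => dotp (lpA p' j) θ + s * dotp (lpA p' j) h from funext fun s => hdot _ s]
        have : Tendsto (fun s : ℝ => dotp (lpA p' j) θ + s * dotp (lpA p' j) h) (𝓝 0)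
            (𝓝 (dotp (lpA p' j) θ + 0 * dotp (lpA p' j) h)) :=
          (tendsto_const_nhds.add (tendsto_id.mul tendsto_const_nhds))
        simpa using this
      have hev : ∀ᶠ s in 𝓝[>] (0:ℝ), dotp (lpA p' j) (θ + s • h) < lpb p' j :=
        (htd.eventually_lt_const hlt).filter_mono nhdsWithin_le_nhds
      filter_upwards [hev] with s hs
      exact hs.le
  have hfe : ∀ᶠ s in 𝓝[>] (0:ℝ), (θ + s • h) ∈ feasSet Θ p' ∧ 0 < s := by
    have hall := eventually_all.mpr hineq
    have hpos : ∀ᶠ s in 𝓝[>] (0:ℝ), (0:ℝ) < s := self_mem_nhdsWithin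
    filter_upwards [hΘev.filter_mono nhdsWithin_le_nhds, hall, hpos] with s h1 h2 h3
    exact ⟨⟨h1, fun i => by rw [hdot, heq i, mul_zero, add_zero]; exact hopt.1.2.1 i, h2⟩, h3⟩
  obtain ⟨s, hsfe, hspos⟩ := hfe.exists
  have hle := hopt.2 _ hsfe
  rw [hdot] at hle
  have : 0 ≤ s * dotp (lpc p') h := by linarith
  exact le_of_mul_le_mul_left (by simpa using this) hspos

end KKT
section KKT2
variable {d r₁ r₂ : ℕ}

lemma exists_kkt_min (Θ : Set (Fin d → ℝ)) (p' : LPData d r₁ r₂) (θ : Fin d → ℝ) {κ : ℝ}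
    (hκ : 0 < κ) (hopt : IsOptMin Θ p' θ) (hint : θ ∈ interior Θ) (hlicq : LICQ p' θ κ) :
    ∃ μ lam, IsKKTMin Θ p' θ μ lam := by
  classical
  obtain ⟨μ, lam, hsupp, hE, hA⟩ := solve_rows p' θ hκ hlicq
    (fun i => dotp (lpE p' i) (fun x => -lpc p' x))
    (fun j => dotp (lpA p' j) (fun x => -lpc p' x))
  set z := comb p' μ lam with hzdef
  set w : Fin d → ℝ := fun x => -lpc p' x - z x with hw
  have hwE : ∀ i, dotp (lpE p' i) w = 0 := by
    intro i
    rw [hw, show (fun x => -lpc p' x - z x) = fun x => (fun y => -lpc p' y) x - z x from rfl,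
      dotp_fun_sub]
    rw [sub_eq_zero]
    exact (hE i).symm
  have hwA : ∀ j, dotp (lpA p' j) θ = lpb p' j → dotp (lpA p' j) w = 0 := by
    intro j hj
    rw [hw, show (fun x => -lpc p' x - z x) = fun x => (fun y => -lpc p' y) x - z x from rfl,
      dotp_fun_sub]
    rw [sub_eq_zero]
    exact (hA j hj).symm
  have h1 : 0 ≤ dotp (lpc p') w :=
    feasdir Θ p' θ hopt hint w hwE (fun j hj => (hwA j hj).le)
  have h2 : 0 ≤ dotp (lpc p') (fun x => -w x) := by
    refine feasdir Θ p' θ hopt hint _ (fun i => ?_) (fun j hj => ?_)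
    · rw [dotp_fun_neg, hwE i, neg_zero]
    · rw [dotp_fun_neg, hwA j hj, neg_zero]
  rw [dotp_fun_neg] at h2
  have hcw0 : dotp (lpc p') w = 0 := le_antisymm (by linarith) h1
  have hzw : dotp z w = 0 := by
    rw [hzdef, dotp_comb_left]
    rw [Finset.sum_eq_zero fun i _ => by rw [hwE i, mul_zero],
      Finset.sum_eq_zero fun j _ => ?_, add_zero]
    by_cases hj : dotp (lpA p' j) θ = lpb p' j
    · rw [hwA j hj, mul_zero]
    · rw [hsupp j hj, zero_mul]
  have hcfun : lpc p' = fun x => -z x - w x := by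
    funext x
    rw [hw]
    ring
  have hcw : dotp (lpc p') w = -dotp z w - dotp w w := by
    rw [dotp_comm, hcfun, show (fun x => -z x - w x) = fun x => (fun y => -z y) x - w x from rfl,
      dotp_fun_sub, dotp_fun_neg, dotp_comm w z]
  have hww : dotp w w = 0 := by rw [hcw, hzw] at hcw0; linarith
  have hww' : ∑ x, w x * w x = 0 := hww
  have hwzero : ∀ x, w x = 0 := fun x =>
    mul_self_eq_zero.mp
      ((Finset.sum_eq_zero_iff_of_nonneg fun x _ => mul_self_nonneg (w x)).mp hww' x
        (Finset.mem_univ x))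
  have hcz : ∀ x, lpc p' x = -z x := by
    intro x
    have h := hwzero x
    rw [hw] at h
    simp only at h
    linarith
  refine ⟨μ, lam, hopt.1, hint, ?_, ?_, ?_⟩
  · -- nonnegativity
    intro j₀
    by_cases hact : dotp (lpA p' j₀) θ = lpb p' j₀
    · obtain ⟨μ', lam', hsupp', hE', hA'⟩ := solve_rows p' θ hκ hlicq
        (fun _ => (0:ℝ)) (fun j => if j = j₀ then (-1:ℝ) else 0)
      set hvec := comb p' μ' lam' with hvdef
      have hstep : 0 ≤ dotp (lpc p') hvec := by
        refine feasdir Θ p' θ hopt hint hvec (fun i => hE' i) (fun j hj => ?_)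
        rw [hA' j hj]
        split_ifs <;> norm_num
      have hdz : dotp z hvec = lam j₀ * (-1) := by
        rw [hzdef, dotp_comb_left]
        rw [Finset.sum_eq_zero fun i _ => by rw [hE' i, mul_zero], zero_add]
        refine Finset.sum_eq_single j₀ (fun j _ hne => ?_) (fun habs => absurd (Finset.mem_univ j₀) habs) |>.trans ?_
        · by_cases hj : dotp (lpA p' j) θ = lpb p' j
          · rw [hA' j hj, if_neg hne, mul_zero]
          · rw [hsupp j hj, zero_mul]
        · rw [hA' j₀ hact, if_pos rfl]
      have hcv : dotp (lpc p') hvec = -dotp z hvec := by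
        rw [show lpc p' = fun x => -z x from funext hcz, dotp_comm, dotp_fun_neg, dotp_comm]
      rw [hcv, hdz] at hstep
      linarith
    · exact le_of_eq (hsupp j₀ hact).symm
  · -- complementary slackness
    intro j
    by_cases hact : dotp (lpA p' j) θ = lpb p' j
    · rw [hact, sub_self, mul_zero]
    · rw [hsupp j hact, zero_mul]
  · -- stationarity
    intro x
    have h := hcz x
    have hzx : z x = (∑ i, μ i * lpE p' i x) + ∑ j, lam j * lpA p' j x := rfl
    rw [hzx] at h
    linarith

lemma kkt_bound (p' : LPData d r₁ r₂) (θ : Fin d → ℝ) (μ : Fin r₁ → ℝ) (lam : Fin r₂ → ℝ)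
    {κ : ℝ} (hlicq : LICQ p' θ κ)
    (hcomp : ∀ j, lam j * (dotp (lpA p' j) θ - lpb p' j) = 0)
    (hstat : ∀ x, lpc p' x + (∑ i, μ i * lpE p' i x) + (∑ j, lam j * lpA p' j x) = 0) :
    κ * ((∑ i, μ i ^ 2) + ∑ j, lam j ^ 2) ≤ ∑ x, lpc p' x ^ 2 := by
  have hsupp : ∀ j, dotp (lpA p' j) θ ≠ lpb p' j → lam j = 0 := by
    intro j hj
    rcases mul_eq_zero.mp (hcomp j) with h | h
    · exact h
    · exact absurd (by linarith : dotp (lpA p' j) θ = lpb p' j) hj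
  refine (hlicq μ lam hsupp).trans (le_of_eq (Finset.sum_congr rfl fun x _ => ?_))
  have h := hstat x
  have h2 : (∑ i, μ i * lpE p' i x) + ∑ j, lam j * lpA p' j x = -lpc p' x := by linarith
  rw [h2]
  ring

lemma kkt_unique (p' : LPData d r₁ r₂) (θ : Fin d → ℝ) {κ : ℝ} (hκ : 0 < κ)
    (hlicq : LICQ p' θ κ) (μ₁ μ₂ : Fin r₁ → ℝ) (lam₁ lam₂ : Fin r₂ → ℝ)
    (hcomp₁ : ∀ j, lam₁ j * (dotp (lpA p' j) θ - lpb p' j) = 0)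
    (hstat₁ : ∀ x, lpc p' x + (∑ i, μ₁ i * lpE p' i x) + (∑ j, lam₁ j * lpA p' j x) = 0)
    (hcomp₂ : ∀ j, lam₂ j * (dotp (lpA p' j) θ - lpb p' j) = 0)
    (hstat₂ : ∀ x, lpc p' x + (∑ i, μ₂ i * lpE p' i x) + (∑ j, lam₂ j * lpA p' j x) = 0) :
    μ₁ = μ₂ ∧ lam₁ = lam₂ := by
  have hsupp : ∀ j, dotp (lpA p' j) θ ≠ lpb p' j →
      (fun j => lam₁ j - lam₂ j) j = 0 := by
    intro j hj
    have h1 : lam₁ j = 0 := by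
      rcases mul_eq_zero.mp (hcomp₁ j) with h | h
      · exact h
      · exact absurd (by linarith : dotp (lpA p' j) θ = lpb p' j) hj
    have h2 : lam₂ j = 0 := by
      rcases mul_eq_zero.mp (hcomp₂ j) with h | h
      · exact h
      · exact absurd (by linarith : dotp (lpA p' j) θ = lpb p' j) hj
    simp [h1, h2]
  have hz : ∀ x, (∑ i, (μ₁ i - μ₂ i) * lpE p' i x) + ∑ j, (lam₁ j - lam₂ j) * lpA p' j x = 0 := by
    intro x
    have h1 := hstat₁ x
    have h2 := hstat₂ x
    have e1 : ∑ i, (μ₁ i - μ₂ i) * lpE p' i x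
        = (∑ i, μ₁ i * lpE p' i x) - ∑ i, μ₂ i * lpE p' i x := by
      rw [← Finset.sum_sub_distrib]
      exact Finset.sum_congr rfl fun i _ => by ring
    have e2 : ∑ j, (lam₁ j - lam₂ j) * lpA p' j x
        = (∑ j, lam₁ j * lpA p' j x) - ∑ j, lam₂ j * lpA p' j x := by
      rw [← Finset.sum_sub_distrib]
      exact Finset.sum_congr rfl fun j _ => by ring
    rw [e1, e2]
    linarith
  have hlic := hlicq (fun i => μ₁ i - μ₂ i) (fun j => lam₁ j - lam₂ j) hsupp
  have hrhs : ∑ x, ((∑ i, (μ₁ i - μ₂ i) * lpE p' i x)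
      + ∑ j, (lam₁ j - lam₂ j) * lpA p' j x) ^ 2 = 0 :=
    Finset.sum_eq_zero fun x _ => by rw [hz x]; norm_num
  rw [hrhs] at hlic
  have hs1 : (0:ℝ) ≤ ∑ i, (μ₁ i - μ₂ i) ^ 2 := Finset.sum_nonneg fun i _ => sq_nonneg _
  have hs2 : (0:ℝ) ≤ ∑ j, (lam₁ j - lam₂ j) ^ 2 := Finset.sum_nonneg fun j _ => sq_nonneg _
  have hsum1 : ∑ i, (μ₁ i - μ₂ i) ^ 2 = 0 := by nlinarith
  have hsum2 : ∑ j, (lam₁ j - lam₂ j) ^ 2 = 0 := by nlinarith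
  constructor
  · funext i
    have := (Finset.sum_eq_zero_iff_of_nonneg fun i _ => sq_nonneg (μ₁ i - μ₂ i)).mp hsum1 i
      (Finset.mem_univ i)
    have := (pow_eq_zero_iff two_ne_zero).mp this
    linarith
  · funext j
    have := (Finset.sum_eq_zero_iff_of_nonneg fun j _ => sq_nonneg (lam₁ j - lam₂ j)).mp hsum2 j
      (Finset.mem_univ j)
    have := (pow_eq_zero_iff two_ne_zero).mp this
    linarith

lemma lowVal_eq (Θ : Set (Fin d → ℝ)) (p' : LPData d r₁ r₂) (θ : Fin d → ℝ)
    (hopt : IsOptMin Θ p' θ) : lowVal Θ p' = dotp (lpc p') θ :=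
  IsLeast.csInf_eq ⟨Set.mem_image_of_mem _ hopt.1, by
    rintro y ⟨θ', hθ', rfl⟩
    exact hopt.2 θ' hθ'⟩

lemma upVal_eq (Θ : Set (Fin d → ℝ)) (p' : LPData d r₁ r₂) (θ : Fin d → ℝ)
    (hopt : IsOptMax Θ p' θ) : upVal Θ p' = dotp (lpc p') θ :=
  IsGreatest.csSup_eq ⟨Set.mem_image_of_mem _ hopt.1, by
    rintro y ⟨θ', hθ', rfl⟩
    exact hopt.2 θ' hθ'⟩

end KKT2
section Conv
open Filter Topology
variable {d r₁ r₂ : ℕ}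

lemma abs_lpc_le (p' : LPData d r₁ r₂) (x : Fin d) : |lpc p' x| ≤ ‖p'‖ :=
  calc |lpc p' x| = ‖(p'.2.2.2.2) x‖ := (Real.norm_eq_abs _).symm
    _ ≤ ‖p'.2.2.2.2‖ := norm_le_pi_norm _ x
    _ ≤ ‖p'.2.2.2‖ := norm_snd_le _
    _ ≤ ‖p'.2.2‖ := norm_snd_le _
    _ ≤ ‖p'.2‖ := norm_snd_le _
    _ ≤ ‖p'‖ := norm_snd_le _

lemma tendsto_dotp {n : ℕ} {α : Type*} {l : Filter α} {aseq bseq : α → Fin n → ℝ}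
    {a b : Fin n → ℝ} (ha : Tendsto aseq l (𝓝 a)) (hb : Tendsto bseq l (𝓝 b)) :
    Tendsto (fun k => dotp (aseq k) (bseq k)) l (𝓝 (dotp a b)) := by
  simp only [dotp]
  exact tendsto_finset_sum _ fun x _ =>
    (tendsto_pi_nhds.mp ha x).mul (tendsto_pi_nhds.mp hb x)

lemma tendsto_lpE {α : Type*} {l : Filter α} {pseq : α → LPData d r₁ r₂} {p : LPData d r₁ r₂}
    (hp : Tendsto pseq l (𝓝 p)) (i : Fin r₁) :
    Tendsto (fun n => lpE (pseq n) i) l (𝓝 (lpE p i)) :=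
  tendsto_pi_nhds.mp ((continuous_fst.tendsto p).comp hp) i

lemma tendsto_lpf {α : Type*} {l : Filter α} {pseq : α → LPData d r₁ r₂} {p : LPData d r₁ r₂}
    (hp : Tendsto pseq l (𝓝 p)) (i : Fin r₁) :
    Tendsto (fun n => lpf (pseq n) i) l (𝓝 (lpf p i)) :=
  tendsto_pi_nhds.mp ((continuous_fst.tendsto p.2).comp ((continuous_snd.tendsto p).comp hp)) i

lemma tendsto_lpA {α : Type*} {l : Filter α} {pseq : α → LPData d r₁ r₂} {p : LPData d r₁ r₂}
    (hp : Tendsto pseq l (𝓝 p)) (j : Fin r₂) :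
    Tendsto (fun n => lpA (pseq n) j) l (𝓝 (lpA p j)) :=
  tendsto_pi_nhds.mp ((continuous_fst.tendsto p.2.2).comp
    ((continuous_snd.tendsto p.2).comp ((continuous_snd.tendsto p).comp hp))) j

lemma tendsto_lpb {α : Type*} {l : Filter α} {pseq : α → LPData d r₁ r₂} {p : LPData d r₁ r₂}
    (hp : Tendsto pseq l (𝓝 p)) (j : Fin r₂) :
    Tendsto (fun n => lpb (pseq n) j) l (𝓝 (lpb p j)) :=
  tendsto_pi_nhds.mp ((continuous_fst.tendsto p.2.2.2).comp ((continuous_snd.tendsto p.2.2).comp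
    ((continuous_snd.tendsto p.2).comp ((continuous_snd.tendsto p).comp hp)))) j

lemma tendsto_lpc {α : Type*} {l : Filter α} {pseq : α → LPData d r₁ r₂} {p : LPData d r₁ r₂}
    (hp : Tendsto pseq l (𝓝 p)) :
    Tendsto (fun n => lpc (pseq n)) l (𝓝 (lpc p)) :=
  (continuous_snd.tendsto p.2.2.2).comp ((continuous_snd.tendsto p.2.2).comp
    ((continuous_snd.tendsto p.2).comp ((continuous_snd.tendsto p).comp hp)))

lemma conv_kkt (Θ : Set (Fin d → ℝ)) (hΘcomp : IsCompact Θ)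
    (p : LPData d r₁ r₂) (ε κ : ℝ) (hε : 0 < ε) (hκ : 0 < κ)
    (hregmin : ∀ p' : LPData d r₁ r₂, ‖p' - p‖ ≤ ε →
      ∃ θ0, IsOptMin Θ p' θ0 ∧ (∀ θ, IsOptMin Θ p' θ → θ = θ0) ∧ θ0 ∈ interior Θ ∧ LICQ p' θ0 κ)
    (θm : Fin d → ℝ) (μm : Fin r₁ → ℝ) (lamm : Fin r₂ → ℝ) (hKKTm : IsKKTMin Θ p θm μm lamm)
    (pseq : ℕ → LPData d r₁ r₂) (hp : Tendsto pseq atTop (𝓝 p))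
    (hball : ∀ n, ‖pseq n - p‖ ≤ ε)
    (θs : ℕ → Fin d → ℝ) (μs : ℕ → Fin r₁ → ℝ) (lams : ℕ → Fin r₂ → ℝ)
    (hkkt : ∀ n, IsKKTMin Θ (pseq n) (θs n) (μs n) (lams n))
    (hlicqs : ∀ n, LICQ (pseq n) (θs n) κ) :
    Tendsto (fun n => (θs n, μs n, lams n)) atTop (𝓝 (θm, μm, lamm)) := by
  -- uniform bound for the multipliers
  have hcbound : ∀ n, ∑ x, lpc (pseq n) x ^ 2 ≤ d * (‖p‖ + ε) ^ 2 := by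
    intro n
    have hb : ∀ x, |lpc (pseq n) x| ≤ ‖p‖ + ε := by
      intro x
      calc |lpc (pseq n) x| ≤ ‖pseq n‖ := abs_lpc_le _ x
        _ = ‖p + (pseq n - p)‖ := by rw [show p + (pseq n - p) = pseq n from by abel]
        _ ≤ ‖p‖ + ‖pseq n - p‖ := norm_add_le _ _
        _ ≤ ‖p‖ + ε := by linarith [hball n]
    calc ∑ x, lpc (pseq n) x ^ 2 ≤ ∑ _x : Fin d, (‖p‖ + ε) ^ 2 := by
          refine Finset.sum_le_sum fun x _ => ?_
          have h := abs_le.mp (hb x)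
          nlinarith [h.1, h.2]
      _ = d * (‖p‖ + ε) ^ 2 := by
          rw [Finset.sum_const, Finset.card_univ, Fintype.card_fin, nsmul_eq_mul]
  have hmul : ∀ n, (∑ i, μs n i ^ 2) + ∑ j, lams n j ^ 2 ≤ d * (‖p‖ + ε) ^ 2 / κ := by
    intro n
    have hb := kkt_bound (pseq n) (θs n) (μs n) (lams n) (hlicqs n)
      (hkkt n).2.2.2.1 (hkkt n).2.2.2.2
    rw [le_div_iff₀ hκ]
    nlinarith [hcbound n]
  set R := Real.sqrt (d * (‖p‖ + ε) ^ 2 / κ) with hRdef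
  have hR : 0 ≤ R := Real.sqrt_nonneg _
  have hsq : ∀ c : ℝ, c ^ 2 ≤ d * (‖p‖ + ε) ^ 2 / κ → |c| ≤ R := by
    intro c hc
    rw [hRdef, ← Real.sqrt_sq_eq_abs]
    exact Real.sqrt_le_sqrt hc
  have hμball : ∀ n, μs n ∈ Metric.closedBall (0 : Fin r₁ → ℝ) R := by
    intro n
    rw [Metric.mem_closedBall, dist_zero_right, pi_norm_le_iff_of_nonneg hR]
    intro i
    rw [Real.norm_eq_abs]
    refine hsq _ ?_
    have h1 : μs n i ^ 2 ≤ ∑ i, μs n i ^ 2 :=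
      Finset.single_le_sum (fun i _ => sq_nonneg (μs n i)) (Finset.mem_univ i)
    have h2 : (0:ℝ) ≤ ∑ j, lams n j ^ 2 := Finset.sum_nonneg fun j _ => sq_nonneg _
    linarith [hmul n]
  have hlamball : ∀ n, lams n ∈ Metric.closedBall (0 : Fin r₂ → ℝ) R := by
    intro n
    rw [Metric.mem_closedBall, dist_zero_right, pi_norm_le_iff_of_nonneg hR]
    intro j
    rw [Real.norm_eq_abs]
    refine hsq _ ?_
    have h1 : lams n j ^ 2 ≤ ∑ j, lams n j ^ 2 :=
      Finset.single_le_sum (fun j _ => sq_nonneg (lams n j)) (Finset.mem_univ j)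
    have h2 : (0:ℝ) ≤ ∑ i, μs n i ^ 2 := Finset.sum_nonneg fun i _ => sq_nonneg _
    linarith [hmul n]
  -- the subsequence argument
  apply Filter.tendsto_of_subseq_tendsto
  intro ns hns
  have hK : IsCompact (Θ ×ˢ ((Metric.closedBall (0 : Fin r₁ → ℝ) R) ×ˢ
      (Metric.closedBall (0 : Fin r₂ → ℝ) R))) :=
    hΘcomp.prod ((isCompact_closedBall _ _).prod (isCompact_closedBall _ _))
  have hmem : ∀ k, (θs (ns k), μs (ns k), lams (ns k)) ∈ Θ ×ˢ
      ((Metric.closedBall (0 : Fin r₁ → ℝ) R) ×ˢ (Metric.closedBall (0 : Fin r₂ → ℝ) R)) :=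
    fun k => ⟨(hkkt (ns k)).1.1, hμball (ns k), hlamball (ns k)⟩
  obtain ⟨v, hvK, φ, hφmono, hφtend⟩ := hK.tendsto_subseq hmem
  obtain ⟨θI, μI, lamI⟩ := v
  refine ⟨φ, ?_⟩
  set m := fun k => ns (φ k) with hmdef
  have hm : Tendsto m atTop atTop := hns.comp hφmono.tendsto_atTop
  have hpm : Tendsto (fun k => pseq (m k)) atTop (𝓝 p) := hp.comp hm
  have hθt : Tendsto (fun k => θs (m k)) atTop (𝓝 θI) :=
    (continuous_fst.tendsto _).comp hφtend
  have hμt : Tendsto (fun k => μs (m k)) atTop (𝓝 μI) :=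
    ((continuous_fst.tendsto _).comp ((continuous_snd.tendsto _).comp hφtend))
  have hlamt : Tendsto (fun k => lams (m k)) atTop (𝓝 lamI) :=
    ((continuous_snd.tendsto _).comp ((continuous_snd.tendsto _).comp hφtend))
  -- limit facts
  have hfeasI : θI ∈ feasSet Θ p := by
    refine ⟨hvK.1, fun i => ?_, fun j => ?_⟩
    · refine tendsto_nhds_unique
        ((tendsto_dotp (tendsto_lpE hpm i) hθt).congr' ?_) (tendsto_lpf hpm i)
      exact Eventually.of_forall fun k => (hkkt (m k)).1.2.1 i
    · exact le_of_tendsto_of_tendsto' (tendsto_dotp (tendsto_lpA hpm j) hθt)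
        (tendsto_lpb hpm j) (fun k => (hkkt (m k)).1.2.2 j)
  have hlamI : ∀ j, 0 ≤ lamI j := by
    intro j
    exact le_of_tendsto_of_tendsto' (tendsto_const_nhds)
      (tendsto_pi_nhds.mp hlamt j) (fun k => (hkkt (m k)).2.2.1 j)
  have hcompI : ∀ j, lamI j * (dotp (lpA p j) θI - lpb p j) = 0 := by
    intro j
    have hprod : Tendsto (fun k => lams (m k) j *
        (dotp (lpA (pseq (m k)) j) (θs (m k)) - lpb (pseq (m k)) j)) atTop
        (𝓝 (lamI j * (dotp (lpA p j) θI - lpb p j))) :=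
      (tendsto_pi_nhds.mp hlamt j).mul
        ((tendsto_dotp (tendsto_lpA hpm j) hθt).sub (tendsto_lpb hpm j))
    have hz : (fun k => lams (m k) j *
        (dotp (lpA (pseq (m k)) j) (θs (m k)) - lpb (pseq (m k)) j)) = fun _ => (0:ℝ) :=
      funext fun k => (hkkt (m k)).2.2.2.1 j
    rw [hz] at hprod
    exact tendsto_nhds_unique hprod tendsto_const_nhds
  have hstatI : ∀ x, lpc p x + (∑ i, μI i * lpE p i x) + (∑ j, lamI j * lpA p j x) = 0 := by
    intro x
    have hprod : Tendsto (fun k => lpc (pseq (m k)) x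
        + (∑ i, μs (m k) i * lpE (pseq (m k)) i x)
        + ∑ j, lams (m k) j * lpA (pseq (m k)) j x) atTop
        (𝓝 (lpc p x + (∑ i, μI i * lpE p i x) + ∑ j, lamI j * lpA p j x)) := by
      refine Tendsto.add (Tendsto.add (tendsto_pi_nhds.mp (tendsto_lpc hpm) x) ?_) ?_
      · exact tendsto_finset_sum _ fun i _ =>
          (tendsto_pi_nhds.mp hμt i).mul (tendsto_pi_nhds.mp (tendsto_lpE hpm i) x)
      · exact tendsto_finset_sum _ fun j _ =>
          (tendsto_pi_nhds.mp hlamt j).mul (tendsto_pi_nhds.mp (tendsto_lpA hpm j) x)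
    have hz : (fun k => lpc (pseq (m k)) x
        + (∑ i, μs (m k) i * lpE (pseq (m k)) i x)
        + ∑ j, lams (m k) j * lpA (pseq (m k)) j x) = fun _ => (0:ℝ) :=
      funext fun k => (hkkt (m k)).2.2.2.2 x
    rw [hz] at hprod
    exact tendsto_nhds_unique hprod tendsto_const_nhds
  -- identify the limit
  obtain ⟨θ0, hopt0, huniq, hint0, hlicq0⟩ := hregmin p (by rw [sub_self, norm_zero]; exact hε.le)
  have hoptI : IsOptMin Θ p θI := kkt_isOptMin Θ p θI μI lamI hfeasI hcompI hstatI hlamI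
  have hoptm : IsOptMin Θ p θm :=
    kkt_isOptMin Θ p θm μm lamm hKKTm.1 hKKTm.2.2.2.1 hKKTm.2.2.2.2 hKKTm.2.2.1
  have hIm : θI = θm := (huniq _ hoptI).trans (huniq _ hoptm).symm
  subst hIm
  have hlicqm : LICQ p θI κ := by
    have := huniq _ hoptm
    rwa [← this] at hlicq0
  obtain ⟨hμeq, hlameq⟩ := kkt_unique p θI hκ hlicqm μI μm lamI lamm hcompI hstatI
    hKKTm.2.2.2.1 hKKTm.2.2.2.2
  rw [← hμeq, ← hlameq]
  exact hφtend

end Conv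
section Main
open Filter Topology
variable {d r₁ r₂ : ℕ}

/-- The envelope-theorem directional-derivative formula. -/
noncomputable def Gfun (q : LPData d r₁ r₂) (θ : Fin d → ℝ) (μ : Fin r₁ → ℝ)
    (lam : Fin r₂ → ℝ) : ℝ :=
  dotp (lpc q) θ + (∑ i, μ i * (dotp (lpE q i) θ - lpf q i))
    + ∑ j, lam j * (dotp (lpA q j) θ - lpb q j)

lemma tendsto_Gfun {qs : ℕ → LPData d r₁ r₂} {q : LPData d r₁ r₂} {θs : ℕ → Fin d → ℝ}
    {θ : Fin d → ℝ} {μs : ℕ → Fin r₁ → ℝ} {μ : Fin r₁ → ℝ} {lams : ℕ → Fin r₂ → ℝ}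
    {lam : Fin r₂ → ℝ}
    (hq : Tendsto qs atTop (𝓝 q)) (hθ : Tendsto θs atTop (𝓝 θ))
    (hμ : Tendsto μs atTop (𝓝 μ)) (hlam : Tendsto lams atTop (𝓝 lam)) :
    Tendsto (fun n => Gfun (qs n) (θs n) (μs n) (lams n)) atTop (𝓝 (Gfun q θ μ lam)) := by
  simp only [Gfun]
  refine Tendsto.add (Tendsto.add (tendsto_dotp (tendsto_lpc hq) hθ) ?_) ?_
  · exact tendsto_finset_sum _ fun i _ => (tendsto_pi_nhds.mp hμ i).mul
      ((tendsto_dotp (tendsto_lpE hq i) hθ).sub (tendsto_lpf hq i))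
  · exact tendsto_finset_sum _ fun j _ => (tendsto_pi_nhds.mp hlam j).mul
      ((tendsto_dotp (tendsto_lpA hq j) hθ).sub (tendsto_lpb hq j))

lemma dotp_entry_smul_E (p₁ q : LPData d r₁ r₂) (t : ℝ) (i : Fin r₁) (θ' : Fin d → ℝ) :
    dotp (lpE (p₁ + t • q) i) θ' = dotp (lpE p₁ i) θ' + t * dotp (lpE q i) θ' := by
  rw [show lpE (p₁ + t • q) i = fun x => lpE p₁ i x + (fun y => t * lpE q i y) x from rfl]
  rw [dotp_comm, dotp_fun_add, dotp_fun_mul, dotp_comm θ', dotp_comm θ']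

lemma dotp_entry_smul_A (p₁ q : LPData d r₁ r₂) (t : ℝ) (j : Fin r₂) (θ' : Fin d → ℝ) :
    dotp (lpA (p₁ + t • q) j) θ' = dotp (lpA p₁ j) θ' + t * dotp (lpA q j) θ' := by
  rw [show lpA (p₁ + t • q) j = fun x => lpA p₁ j x + (fun y => t * lpA q j y) x from rfl]
  rw [dotp_comm, dotp_fun_add, dotp_fun_mul, dotp_comm θ', dotp_comm θ']

lemma dotp_entry_smul_c (p₁ q : LPData d r₁ r₂) (t : ℝ) (θ' : Fin d → ℝ) :
    dotp (lpc (p₁ + t • q)) θ' = dotp (lpc p₁) θ' + t * dotp (lpc q) θ' := by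
  rw [show lpc (p₁ + t • q) = fun x => lpc p₁ x + (fun y => t * lpc q y) x from rfl]
  rw [dotp_comm, dotp_fun_add, dotp_fun_mul, dotp_comm θ', dotp_comm θ']

lemma low_sandwich (Θ : Set (Fin d → ℝ)) (p₁ q : LPData d r₁ r₂) (t : ℝ) (ht : 0 < t)
    (θ₁ : Fin d → ℝ) (μ₁ : Fin r₁ → ℝ) (lam₁ : Fin r₂ → ℝ)
    (h1 : IsKKTMin Θ p₁ θ₁ μ₁ lam₁) (hopt1 : IsOptMin Θ p₁ θ₁)
    (θ₂ : Fin d → ℝ) (μ₂ : Fin r₁ → ℝ) (lam₂ : Fin r₂ → ℝ)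
    (h2 : IsKKTMin Θ (p₁ + t • q) θ₂ μ₂ lam₂) (hopt2 : IsOptMin Θ (p₁ + t • q) θ₂) :
    t * Gfun q θ₂ μ₁ lam₁ ≤ lowVal Θ (p₁ + t • q) - lowVal Θ p₁ ∧
    lowVal Θ (p₁ + t • q) - lowVal Θ p₁ ≤ t * Gfun q θ₁ μ₂ lam₂ := by
  have hfd : ∀ i, lpf (p₁ + t • q) i = lpf p₁ i + t * lpf q i := fun i => rfl
  have hbd : ∀ j, lpb (p₁ + t • q) j = lpb p₁ j + t * lpb q j := fun j => rfl
  rw [lowVal_eq Θ p₁ θ₁ hopt1, lowVal_eq Θ _ θ₂ hopt2]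
  constructor
  · have hkey := key_ineq Θ p₁ (p₁ + t • q) θ₁ θ₂ μ₁ lam₁ h1.1.2.1 h1.2.2.2.1 h1.2.2.2.2
      h1.2.2.1 hopt2.1
    have e1 : ∑ i, μ₁ i * ((dotp (lpE (p₁ + t • q) i) θ₂ - dotp (lpE p₁ i) θ₂)
        - (lpf (p₁ + t • q) i - lpf p₁ i)) = t * ∑ i, μ₁ i * (dotp (lpE q i) θ₂ - lpf q i) := by
      rw [Finset.mul_sum]
      exact Finset.sum_congr rfl fun i _ => by
        rw [dotp_entry_smul_E p₁ q t i θ₂, hfd i]; ring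
    have e2 : ∑ j, lam₁ j * ((dotp (lpA (p₁ + t • q) j) θ₂ - dotp (lpA p₁ j) θ₂)
        - (lpb (p₁ + t • q) j - lpb p₁ j)) = t * ∑ j, lam₁ j * (dotp (lpA q j) θ₂ - lpb q j) := by
      rw [Finset.mul_sum]
      exact Finset.sum_congr rfl fun j _ => by
        rw [dotp_entry_smul_A p₁ q t j θ₂, hbd j]; ring
    rw [e1, e2] at hkey
    have e3 := dotp_entry_smul_c p₁ q t θ₂
    have hexp : t * Gfun q θ₂ μ₁ lam₁ = t * dotp (lpc q) θ₂
        + (t * ∑ i, μ₁ i * (dotp (lpE q i) θ₂ - lpf q i))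
        + t * ∑ j, lam₁ j * (dotp (lpA q j) θ₂ - lpb q j) := by
      simp only [Gfun]; ring
    linarith
  · have hkey := key_ineq Θ (p₁ + t • q) p₁ θ₂ θ₁ μ₂ lam₂ h2.1.2.1 h2.2.2.2.1 h2.2.2.2.2
      h2.2.2.1 hopt1.1
    have e1 : ∑ i, μ₂ i * ((dotp (lpE p₁ i) θ₁ - dotp (lpE (p₁ + t • q) i) θ₁)
        - (lpf p₁ i - lpf (p₁ + t • q) i))
        = (-t) * ∑ i, μ₂ i * (dotp (lpE q i) θ₁ - lpf q i) := by
      rw [Finset.mul_sum]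
      exact Finset.sum_congr rfl fun i _ => by
        rw [dotp_entry_smul_E p₁ q t i θ₁, hfd i]; ring
    have e2 : ∑ j, lam₂ j * ((dotp (lpA p₁ j) θ₁ - dotp (lpA (p₁ + t • q) j) θ₁)
        - (lpb p₁ j - lpb (p₁ + t • q) j))
        = (-t) * ∑ j, lam₂ j * (dotp (lpA q j) θ₁ - lpb q j) := by
      rw [Finset.mul_sum]
      exact Finset.sum_congr rfl fun j _ => by
        rw [dotp_entry_smul_A p₁ q t j θ₁, hbd j]; ring
    rw [e1, e2] at hkey
    have e3 := dotp_entry_smul_c p₁ q t θ₁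
    have hexp : t * Gfun q θ₁ μ₂ lam₂ = t * dotp (lpc q) θ₁
        + (t * ∑ i, μ₂ i * (dotp (lpE q i) θ₁ - lpf q i))
        + t * ∑ j, lam₂ j * (dotp (lpA q j) θ₁ - lpb q j) := by
      simp only [Gfun]; ring
    linarith

lemma main_min (Θ : Set (Fin d → ℝ)) (hΘcomp : IsCompact Θ)
    (p : LPData d r₁ r₂) (ε κ : ℝ) (hε : 0 < ε) (hκ : 0 < κ)
    (hregmin : ∀ p' : LPData d r₁ r₂, ‖p' - p‖ ≤ ε →
      ∃ θ0, IsOptMin Θ p' θ0 ∧ (∀ θ, IsOptMin Θ p' θ → θ = θ0) ∧ θ0 ∈ interior Θ ∧ LICQ p' θ0 κ)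
    (θm : Fin d → ℝ) (μm : Fin r₁ → ℝ) (lamm : Fin r₂ → ℝ) (hKKTm : IsKKTMin Θ p θm μm lamm)
    (p1 : ℕ → LPData d r₁ r₂) (t : ℕ → ℝ) (qs : ℕ → LPData d r₁ r₂) (q : LPData d r₁ r₂)
    (ht : ∀ n, 0 < t n) (htlim : Tendsto t atTop (𝓝 0))
    (hp1 : Tendsto p1 atTop (𝓝 p)) (hq : Tendsto qs atTop (𝓝 q))
    (hball1 : ∀ n, ‖p1 n - p‖ ≤ ε) (hball2 : ∀ n, ‖p1 n + t n • qs n - p‖ ≤ ε) :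
    Tendsto (fun n => (lowVal Θ (p1 n + t n • qs n) - lowVal Θ (p1 n)) / t n) atTop
      (𝓝 (Gfun q θm μm lamm)) := by
  have hp2 : Tendsto (fun n => p1 n + t n • qs n) atTop (𝓝 p) := by
    have h0 : Tendsto (fun n => t n • qs n) atTop (𝓝 ((0:ℝ) • q)) := htlim.smul hq
    rw [zero_smul] at h0
    have := hp1.add h0
    rwa [add_zero] at this
  have hch1 : ∀ n, ∃ θ0, (IsOptMin Θ (p1 n) θ0 ∧ θ0 ∈ interior Θ ∧ LICQ (p1 n) θ0 κ) ∧
      ∃ μ lam, IsKKTMin Θ (p1 n) θ0 μ lam := by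
    intro n
    obtain ⟨θ0, hopt, _, hint, hlicq⟩ := hregmin (p1 n) (hball1 n)
    exact ⟨θ0, ⟨hopt, hint, hlicq⟩, exists_kkt_min Θ (p1 n) θ0 hκ hopt hint hlicq⟩
  choose θ1 h1a μ1 lam1 h1k using hch1
  have hch2 : ∀ n, ∃ θ0, (IsOptMin Θ (p1 n + t n • qs n) θ0 ∧ θ0 ∈ interior Θ ∧
      LICQ (p1 n + t n • qs n) θ0 κ) ∧ ∃ μ lam, IsKKTMin Θ (p1 n + t n • qs n) θ0 μ lam := by
    intro n
    obtain ⟨θ0, hopt, _, hint, hlicq⟩ := hregmin (p1 n + t n • qs n) (hball2 n)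
    exact ⟨θ0, ⟨hopt, hint, hlicq⟩, exists_kkt_min Θ _ θ0 hκ hopt hint hlicq⟩
  choose θ2 h2a μ2 lam2 h2k using hch2
  have hsand := fun n => low_sandwich Θ (p1 n) (qs n) (t n) (ht n) (θ1 n) (μ1 n) (lam1 n)
    (h1k n) (h1a n).1 (θ2 n) (μ2 n) (lam2 n) (h2k n) (h2a n).1
  have hc1 := conv_kkt Θ hΘcomp p ε κ hε hκ hregmin θm μm lamm hKKTm p1 hp1 hball1
    θ1 μ1 lam1 h1k (fun n => (h1a n).2.2)
  have hc2 := conv_kkt Θ hΘcomp p ε κ hε hκ hregmin θm μm lamm hKKTm _ hp2 hball2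
    θ2 μ2 lam2 h2k (fun n => (h2a n).2.2)
  have hθ1 : Tendsto θ1 atTop (𝓝 θm) := (continuous_fst.tendsto _).comp hc1
  have hμ1 : Tendsto μ1 atTop (𝓝 μm) :=
    (continuous_fst.tendsto _).comp ((continuous_snd.tendsto _).comp hc1)
  have hlam1 : Tendsto lam1 atTop (𝓝 lamm) :=
    (continuous_snd.tendsto _).comp ((continuous_snd.tendsto _).comp hc1)
  have hθ2 : Tendsto θ2 atTop (𝓝 θm) := (continuous_fst.tendsto _).comp hc2
  have hμ2 : Tendsto μ2 atTop (𝓝 μm) :=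
    (continuous_fst.tendsto _).comp ((continuous_snd.tendsto _).comp hc2)
  have hlam2 : Tendsto lam2 atTop (𝓝 lamm) :=
    (continuous_snd.tendsto _).comp ((continuous_snd.tendsto _).comp hc2)
  have hG1 := tendsto_Gfun hq hθ2 hμ1 hlam1
  have hG2 := tendsto_Gfun hq hθ1 hμ2 hlam2
  refine tendsto_of_tendsto_of_tendsto_of_le_of_le hG1 hG2 (fun n => ?_) (fun n => ?_)
  · rw [le_div_iff₀ (ht n)]
    have := (hsand n).1
    linarith [this]
  · rw [div_le_iff₀ (ht n)]
    have := (hsand n).2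
    linarith [this]

end Main
section Negc
open Filter Topology
variable {d r₁ r₂ : ℕ}

/-- Negate the objective vector of LP data. -/
def negc (p : LPData d r₁ r₂) : LPData d r₁ r₂ :=
  (p.1, p.2.1, p.2.2.1, p.2.2.2.1, -p.2.2.2.2)

lemma negc_negc (a : LPData d r₁ r₂) : negc (negc a) = a := by
  refine Prod.ext rfl (Prod.ext rfl (Prod.ext rfl (Prod.ext rfl ?_)))
  show -(-a.2.2.2.2) = a.2.2.2.2
  rw [neg_neg]

lemma negc_sub (a b : LPData d r₁ r₂) : negc a - negc b = negc (a - b) := by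
  refine Prod.ext rfl (Prod.ext rfl (Prod.ext rfl (Prod.ext rfl ?_)))
  show -a.2.2.2.2 - -b.2.2.2.2 = -(a.2.2.2.2 - b.2.2.2.2)
  abel

lemma norm_negc (a : LPData d r₁ r₂) : ‖negc a‖ = ‖a‖ := by
  simp only [negc, Prod.norm_def, norm_neg]

lemma negc_add_smul (a b : LPData d r₁ r₂) (t : ℝ) :
    negc (a + t • b) = negc a + t • negc b := by
  refine Prod.ext rfl (Prod.ext rfl (Prod.ext rfl (Prod.ext rfl ?_)))
  show -(a.2.2.2.2 + t • b.2.2.2.2) = -a.2.2.2.2 + t • -b.2.2.2.2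
  rw [neg_add, ← smul_neg]

lemma dotp_lpc_negc (p' : LPData d r₁ r₂) (v : Fin d → ℝ) :
    dotp (lpc (negc p')) v = -dotp (lpc p') v := by
  rw [show lpc (negc p') = fun x => -(lpc p' x) from rfl, dotp_comm, dotp_fun_neg, dotp_comm]

lemma feasSet_negc (Θ : Set (Fin d → ℝ)) (p' : LPData d r₁ r₂) :
    feasSet Θ (negc p') = feasSet Θ p' := rfl

lemma isOptMin_negc_iff (Θ : Set (Fin d → ℝ)) (p' : LPData d r₁ r₂) (θ : Fin d → ℝ) :
    IsOptMin Θ (negc p') θ ↔ IsOptMax Θ p' θ := by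
  unfold IsOptMin IsOptMax
  rw [feasSet_negc]
  constructor
  · rintro ⟨h1, h2⟩
    refine ⟨h1, fun θ' hθ' => ?_⟩
    have := h2 θ' hθ'
    rw [dotp_lpc_negc, dotp_lpc_negc] at this
    linarith
  · rintro ⟨h1, h2⟩
    refine ⟨h1, fun θ' hθ' => ?_⟩
    have := h2 θ' hθ'
    rw [dotp_lpc_negc, dotp_lpc_negc]
    linarith

lemma isKKTMax_negc {Θ : Set (Fin d → ℝ)} {p' : LPData d r₁ r₂} {θ : Fin d → ℝ}
    {μ : Fin r₁ → ℝ} {lam : Fin r₂ → ℝ} (hk : IsKKTMax Θ p' θ μ lam) :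
    IsKKTMin Θ (negc p') θ μ lam := by
  obtain ⟨h1, h2, h3, h4, h5⟩ := hk
  exact ⟨h1, h2, h3, h4, fun x => h5 x⟩

lemma licq_negc {p' : LPData d r₁ r₂} {θ : Fin d → ℝ} {κ : ℝ} (h : LICQ p' θ κ) :
    LICQ (negc p') θ κ := h

lemma hregmin_negc {Θ : Set (Fin d → ℝ)} {p : LPData d r₁ r₂} {ε κ : ℝ}
    (hreg : Regular Θ p ε κ) :
    ∀ p' : LPData d r₁ r₂, ‖p' - negc p‖ ≤ ε →
      ∃ θ0, IsOptMin Θ p' θ0 ∧ (∀ θ, IsOptMin Θ p' θ → θ = θ0) ∧ θ0 ∈ interior Θ ∧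
        LICQ p' θ0 κ := by
  intro p' hp'
  have hb : ‖negc p' - p‖ ≤ ε := by
    have h1 : negc p' - p = negc (p' - negc p) := by
      rw [← negc_sub, negc_negc]
    rw [h1, norm_negc]
    exact hp'
  obtain ⟨-, -, θM, hoptM, huniq, hint, hlicq⟩ := hreg (negc p') hb
  refine ⟨θM, ?_, ?_, hint, ?_⟩
  · have := (isOptMin_negc_iff Θ (negc p') θM).mpr hoptM
    rwa [negc_negc] at this
  · intro θ hθ
    have hθ' : IsOptMin Θ (negc (negc p')) θ := by rwa [negc_negc]
    exact huniq θ ((isOptMin_negc_iff Θ (negc p') θ).mp hθ')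
  · exact licq_negc hlicq

lemma lowVal_negc (Θ : Set (Fin d → ℝ)) (p' : LPData d r₁ r₂) (θ : Fin d → ℝ)
    (hopt : IsOptMax Θ p' θ) : lowVal Θ (negc p') = -upVal Θ p' := by
  rw [lowVal_eq Θ (negc p') θ ((isOptMin_negc_iff Θ p' θ).mpr hopt),
    upVal_eq Θ p' θ hopt, dotp_lpc_negc]

end Negc

/-- **Theorem 3.1 (uniform Hadamard directional differentiability of LP value functions).**
For ε-κ-regular LP data `p` with unique KKT points `(θm, μm, lamm)` (min) and
`(θM, μM, lamM)` (max), along any sequences `pₙ → p`, `tₙ ↓ 0`, `qₙ → q` of data directions,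
the difference quotients of the value functions converge to the envelope-theorem formulas. -/
theorem uniform_hadamard_directional_differentiability
    (hd : 1 ≤ d)
    (Θ : Set (Fin d → ℝ)) (hΘne : Θ.Nonempty) (hΘconv : Convex ℝ Θ) (hΘcomp : IsCompact Θ)
    (p : LPData d r₁ r₂) (ε κ : ℝ) (hε : 0 < ε) (hκ : 0 < κ)
    (hreg : Regular Θ p ε κ)
    (θm : Fin d → ℝ) (μm : Fin r₁ → ℝ) (lamm : Fin r₂ → ℝ)
    (hKKTm : IsKKTMin Θ p θm μm lamm)
    (θM : Fin d → ℝ) (μM : Fin r₁ → ℝ) (lamM : Fin r₂ → ℝ)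
    (hKKTM : IsKKTMax Θ p θM μM lamM)
    (pn : ℕ → LPData d r₁ r₂)
    (hpn : Tendsto (fun n => ‖pn n - p‖) atTop (𝓝 0))
    (tn : ℕ → ℝ) (htn_pos : ∀ n, 0 < tn n) (htn : Tendsto tn atTop (𝓝 0))
    (qn : ℕ → LPData d r₁ r₂) (q : LPData d r₁ r₂)
    (hqn : Tendsto (fun n => ‖qn n - q‖) atTop (𝓝 0)) :
    Tendsto (fun n => (lowVal Θ (pn n + tn n • qn n) - lowVal Θ (pn n)) / tn n) atTop
      (𝓝 (dotp (lpc q) θm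
        + dotp μm (fun i => dotp (lpE q i) θm - lpf q i)
        + ∑ j, lamm j * (dotp (lpA q j) θm - lpb q j)))
    ∧ Tendsto (fun n => (upVal Θ (pn n + tn n • qn n) - upVal Θ (pn n)) / tn n) atTop
      (𝓝 (dotp (lpc q) θM
        - dotp μM (fun i => dotp (lpE q i) θM - lpf q i)
        - ∑ j, lamM j * (dotp (lpA q j) θM - lpb q j))) := by
  have hpn' : Tendsto pn atTop (𝓝 p) := tendsto_iff_norm_sub_tendsto_zero.mpr hpn
  have hqn' : Tendsto qn atTop (𝓝 q) := tendsto_iff_norm_sub_tendsto_zero.mpr hqn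
  have hp2' : Tendsto (fun n => pn n + tn n • qn n) atTop (𝓝 p) := by
    have h0 : Tendsto (fun n => tn n • qn n) atTop (𝓝 ((0:ℝ) • q)) := htn.smul hqn'
    rw [zero_smul] at h0
    have := hpn'.add h0
    rwa [add_zero] at this
  have hev1 : ∀ᶠ n in atTop, ‖pn n - p‖ ≤ ε := hpn.eventually (eventually_le_nhds hε)
  have hev2 : ∀ᶠ n in atTop, ‖pn n + tn n • qn n - p‖ ≤ ε :=
    (tendsto_iff_norm_sub_tendsto_zero.mp hp2').eventually (eventually_le_nhds hε)
  obtain ⟨N, hN⟩ := eventually_atTop.mp (hev1.and hev2)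
  have hshift : Tendsto (fun k : ℕ => k + N) atTop atTop := tendsto_add_atTop_nat N
  constructor
  · -- minimization part
    have hregmin : ∀ p' : LPData d r₁ r₂, ‖p' - p‖ ≤ ε →
        ∃ θ0, IsOptMin Θ p' θ0 ∧ (∀ θ, IsOptMin Θ p' θ → θ = θ0) ∧ θ0 ∈ interior Θ ∧
          LICQ p' θ0 κ := fun p' h => (hreg p' h).2.1
    have hmain := main_min Θ hΘcomp p ε κ hε hκ hregmin θm μm lamm hKKTm
      (fun k => pn (k + N)) (fun k => tn (k + N)) (fun k => qn (k + N)) q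
      (fun k => htn_pos _) (htn.comp hshift) (hpn'.comp hshift) (hqn'.comp hshift)
      (fun k => (hN (k + N) (by omega)).1) (fun k => (hN (k + N) (by omega)).2)
    have hGm : Gfun q θm μm lamm = dotp (lpc q) θm
        + dotp μm (fun i => dotp (lpE q i) θm - lpf q i)
        + ∑ j, lamm j * (dotp (lpA q j) θm - lpb q j) := by
      simp only [Gfun, dotp]
    rw [← hGm]
    have hmain' : Tendsto (fun k => (lowVal Θ (pn (k + N) + tn (k + N) • qn (k + N))
        - lowVal Θ (pn (k + N))) / tn (k + N)) atTop (𝓝 (Gfun q θm μm lamm)) := hmain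
    exact (tendsto_add_atTop_iff_nat N).mp hmain'
  · -- maximization part
    have hregmin' := hregmin_negc hreg
    have hKKTm' : IsKKTMin Θ (negc p) θM μM lamM := isKKTMax_negc hKKTM
    have hpnneg : Tendsto (fun n => negc (pn n)) atTop (𝓝 (negc p)) := by
      rw [tendsto_iff_norm_sub_tendsto_zero]
      have : (fun n => ‖negc (pn n) - negc p‖) = fun n => ‖pn n - p‖ := by
        funext n
        rw [negc_sub, norm_negc]
      rw [this]
      exact hpn
    have hqnneg : Tendsto (fun n => negc (qn n)) atTop (𝓝 (negc q)) := by
      rw [tendsto_iff_norm_sub_tendsto_zero]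
      have : (fun n => ‖negc (qn n) - negc q‖) = fun n => ‖qn n - q‖ := by
        funext n
        rw [negc_sub, norm_negc]
      rw [this]
      exact hqn
    have hball1' : ∀ k, ‖negc (pn (k + N)) - negc p‖ ≤ ε := by
      intro k
      rw [negc_sub, norm_negc]
      exact (hN (k + N) (by omega)).1
    have hball2' : ∀ k, ‖negc (pn (k + N)) + tn (k + N) • negc (qn (k + N)) - negc p‖ ≤ ε := by
      intro k
      rw [← negc_add_smul, negc_sub, norm_negc]
      exact (hN (k + N) (by omega)).2
    have hmain := main_min Θ hΘcomp (negc p) ε κ hε hκ hregmin' θM μM lamM hKKTm'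
      (fun k => negc (pn (k + N))) (fun k => tn (k + N)) (fun k => negc (qn (k + N))) (negc q)
      (fun k => htn_pos _) (htn.comp hshift) (hpnneg.comp hshift) (hqnneg.comp hshift)
      hball1' hball2'
    -- translate lowVal of negated data to upVal
    have hmain2 : Tendsto (fun k => -((upVal Θ (pn (k + N) + tn (k + N) • qn (k + N))
        - upVal Θ (pn (k + N))) / tn (k + N))) atTop (𝓝 (Gfun (negc q) θM μM lamM)) := by
      refine hmain.congr fun k => ?_
      obtain ⟨-, -, θa, hopta, -⟩ := hreg (pn (k + N)) (hN (k + N) (by omega)).1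
      obtain ⟨-, -, θb, hoptb, -⟩ :=
        hreg (pn (k + N) + tn (k + N) • qn (k + N)) (hN (k + N) (by omega)).2
      have e1 : lowVal Θ (negc (pn (k + N)) + tn (k + N) • negc (qn (k + N)))
          = -upVal Θ (pn (k + N) + tn (k + N) • qn (k + N)) := by
        rw [← negc_add_smul]
        exact lowVal_negc Θ _ θb hoptb
      have e2 : lowVal Θ (negc (pn (k + N))) = -upVal Θ (pn (k + N)) :=
        lowVal_negc Θ _ θa hopta
      rw [e1, e2]
      ring
    have hmain3 := hmain2.neg
    have hmain4 : Tendsto (fun k => (upVal Θ (pn (k + N) + tn (k + N) • qn (k + N))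
        - upVal Θ (pn (k + N))) / tn (k + N)) atTop (𝓝 (-Gfun (negc q) θM μM lamM)) := by
      refine hmain3.congr fun k => ?_
      ring
    have hGM : -Gfun (negc q) θM μM lamM = dotp (lpc q) θM
        - dotp μM (fun i => dotp (lpE q i) θM - lpf q i)
        - ∑ j, lamM j * (dotp (lpA q j) θM - lpb q j) := by
      have hE : ∀ i, lpE (negc q) i = lpE q i := fun _ => rfl
      have hf : ∀ i, lpf (negc q) i = lpf q i := fun _ => rfl
      have hA : ∀ j, lpA (negc q) j = lpA q j := fun _ => rfl
      have hb : ∀ j, lpb (negc q) j = lpb q j := fun _ => rfl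
      have hc : ∀ x, lpc (negc q) x = -lpc q x := fun _ => rfl
      simp only [Gfun, dotp, hE, hf, hA, hb, hc, neg_mul, Finset.sum_neg_distrib, mul_sub,
        Finset.sum_sub_distrib]
      ring
    rw [← hGM]
    exact (tendsto_add_atTop_iff_nat N).mp hmain4
end

section
/- Uniform boundedness of Lagrange multipliers over a regularity ball (Lemma A.3(i), LP-data form). Let Θ ⊆ ℝ^d be nonempty, convex and compact, and let p be LP data that is ε-κ-regular for some ε > 0 and κ > 0. Then there exists a finite constant L such that for every LP data p' with ‖p' − p‖ ≤ ε, the unique KKT multipliers of the minimization problem satisfy ‖(μ*(p'), λ*(p'))‖ ≤ L, and the unique KKT multipliers of the maximization problem satisfy ‖(μ̄*(p'), λ̄*(p'))‖ ≤ L. -/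
open Filter Topology

variable {d r₁ r₂ : ℕ}

lemma dotp_expand {p' : LPData d r₁ r₂} {μ : Fin r₁ → ℝ} {lam : Fin r₂ → ℝ}
    {c : Fin d → ℝ}
    (hst : ∀ x, c x = -((∑ i, μ i * lpE p' i x) + ∑ j, lam j * lpA p' j x))
    (v : Fin d → ℝ) :
    dotp c v = -((∑ i, μ i * dotp (lpE p' i) v) + ∑ j, lam j * dotp (lpA p' j) v) := by
  unfold dotp
  calc ∑ x, c x * v x
      = ∑ x, (-((∑ i, μ i * lpE p' i x) + ∑ j, lam j * lpA p' j x)) * v x := by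
        exact Finset.sum_congr rfl fun x _ => by rw [hst x]
    _ = -((∑ x, ∑ i, μ i * lpE p' i x * v x) + ∑ x, ∑ j, lam j * lpA p' j x * v x) := by
        simp [neg_mul, add_mul, Finset.sum_add_distrib, Finset.sum_mul]
    _ = -((∑ i, μ i * ∑ x, lpE p' i x * v x) + ∑ j, lam j * ∑ x, lpA p' j x * v x) := by
        have hE : (∑ x, ∑ i, μ i * lpE p' i x * v x)
            = ∑ i, μ i * ∑ x, lpE p' i x * v x := by
          rw [Finset.sum_comm]; simp [Finset.mul_sum, mul_assoc]
        have hA : (∑ x, ∑ j, lam j * lpA p' j x * v x)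
            = ∑ j, lam j * ∑ x, lpA p' j x * v x := by
          rw [Finset.sum_comm]; simp [Finset.mul_sum, mul_assoc]
        rw [hE, hA]

/-- A KKT-style point (with objective `c`) is optimal for minimizing `dotp c` over the
feasible set. -/
lemma kkt_opt {Θ : Set (Fin d → ℝ)} {p' : LPData d r₁ r₂} {θs : Fin d → ℝ}
    {μ : Fin r₁ → ℝ} {lam : Fin r₂ → ℝ} {c : Fin d → ℝ}
    (hfeas : θs ∈ feasSet Θ p') (hlam : ∀ j, 0 ≤ lam j)
    (hcs : ∀ j, lam j * (dotp (lpA p' j) θs - lpb p' j) = 0)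
    (hst : ∀ x, c x = -((∑ i, μ i * lpE p' i x) + ∑ j, lam j * lpA p' j x)) :
    ∀ θ' ∈ feasSet Θ p', dotp c θs ≤ dotp c θ' := by
  intro θ' hθ'
  rw [dotp_expand hst θs, dotp_expand hst θ']
  obtain ⟨-, hE, hA⟩ := hfeas
  obtain ⟨-, hE', hA'⟩ := hθ'
  have h1 : ∀ i, μ i * dotp (lpE p' i) θs = μ i * dotp (lpE p' i) θ' := by
    intro i; rw [hE i, hE' i]
  have h2 : ∀ j, lam j * dotp (lpA p' j) θ' ≤ lam j * dotp (lpA p' j) θs := by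
    intro j
    have e1 : lam j * dotp (lpA p' j) θs = lam j * lpb p' j := by
      have := hcs j; nlinarith [this]
    rw [e1]
    exact mul_le_mul_of_nonneg_left (hA' j) (hlam j)
  have hs1 : (∑ i, μ i * dotp (lpE p' i) θs) = ∑ i, μ i * dotp (lpE p' i) θ' :=
    Finset.sum_congr rfl fun i _ => h1 i
  have hs2 : (∑ j, lam j * dotp (lpA p' j) θ') ≤ ∑ j, lam j * dotp (lpA p' j) θs :=
    Finset.sum_le_sum fun j _ => h2 j
  rw [hs1]
  linarith

lemma licq_bound {p' : LPData d r₁ r₂} {θs : Fin d → ℝ} {κ : ℝ}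
    (hlicq : LICQ p' θs κ) {μ : Fin r₁ → ℝ} {lam : Fin r₂ → ℝ} {c : Fin d → ℝ}
    (hsupp : ∀ j, dotp (lpA p' j) θs ≠ lpb p' j → lam j = 0)
    (hst : ∀ x, c x = -((∑ i, μ i * lpE p' i x) + ∑ j, lam j * lpA p' j x)) :
    κ * ((∑ i, μ i ^ 2) + ∑ j, lam j ^ 2) ≤ ∑ x, (c x) ^ 2 := by
  have := hlicq μ lam hsupp
  have heq : (∑ x, ((∑ i, μ i * lpE p' i x) + ∑ j, lam j * lpA p' j x) ^ 2)
      = ∑ x, (c x) ^ 2 := by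
    refine Finset.sum_congr rfl fun x _ => ?_
    rw [hst x]; ring
  linarith

/-- **Lemma A.3(i) (uniform boundedness of Lagrange multipliers over a regularity ball).**
If `p` is ε-κ-regular, then there is a finite constant `L` such that for every LP data `p'`
with `‖p' − p‖ ≤ ε`, the (unique) KKT multipliers of the minimization problem and of the
maximization problem at `p'` have norm at most `L`. -/
theorem uniform_boundedness_of_multipliers
    (hd : 1 ≤ d)
    (Θ : Set (Fin d → ℝ)) (hΘne : Θ.Nonempty) (hΘconv : Convex ℝ Θ) (hΘcomp : IsCompact Θ)
    (p : LPData d r₁ r₂) (ε κ : ℝ) (hε : 0 < ε) (hκ : 0 < κ)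
    (hreg : Regular Θ p ε κ) :
    ∃ L : ℝ, ∀ p' : LPData d r₁ r₂, ‖p' - p‖ ≤ ε →
      (∀ (θ : Fin d → ℝ) (μ : Fin r₁ → ℝ) (lam : Fin r₂ → ℝ),
        IsKKTMin Θ p' θ μ lam → ‖(μ, lam)‖ ≤ L) ∧
      (∀ (θ : Fin d → ℝ) (μ : Fin r₁ → ℝ) (lam : Fin r₂ → ℝ),
        IsKKTMax Θ p' θ μ lam → ‖(μ, lam)‖ ≤ L) := by
  classical
  set B : ℝ := ‖lpc p‖ + ε with hBdef
  have hB0 : 0 ≤ B := by positivity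
  refine ⟨Real.sqrt (d * B ^ 2 / κ), fun p' hp' => ?_⟩
  obtain ⟨-, ⟨θm, hθmo, hθmu, -, hθml⟩, ⟨θM, hθMo, hθMu, -, hθMl⟩⟩ := hreg p' hp'
  -- bound on the perturbed objective
  have hsub : lpc p' - lpc p = lpc (p' - p) := rfl
  have hcnorm : ‖lpc p' - lpc p‖ ≤ ε := by
    rw [hsub]
    calc ‖(p' - p).2.2.2.2‖ ≤ ‖(p' - p).2.2.2‖ := norm_snd_le _
      _ ≤ ‖(p' - p).2.2‖ := norm_snd_le _
      _ ≤ ‖(p' - p).2‖ := norm_snd_le _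
      _ ≤ ‖p' - p‖ := norm_snd_le _
      _ ≤ ε := hp'
  have hcB : ∀ x, |lpc p' x| ≤ B := by
    intro x
    have h1 : |lpc p' x - lpc p x| ≤ ε := by
      have := norm_le_pi_norm (lpc p' - lpc p) x
      simpa [Real.norm_eq_abs] using this.trans hcnorm
    have h2 : |lpc p x| ≤ ‖lpc p‖ := by
      simpa [Real.norm_eq_abs] using norm_le_pi_norm (lpc p) x
    calc |lpc p' x| ≤ |lpc p' x - lpc p x| + |lpc p x| := by
          simpa using abs_add_le (lpc p' x - lpc p x) (lpc p x)
      _ ≤ ε + ‖lpc p‖ := add_le_add h1 h2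
      _ = B := by rw [hBdef]; ring
  have hsum : ∑ x, (lpc p' x) ^ 2 ≤ d * B ^ 2 := by
    calc ∑ x, (lpc p' x) ^ 2 ≤ ∑ _x : Fin d, B ^ 2 := by
          refine Finset.sum_le_sum fun x _ => ?_
          have := abs_le.1 (hcB x)
          nlinarith [this.1, this.2]
      _ = d * B ^ 2 := by simp [Finset.sum_const, Finset.card_fin, nsmul_eq_mul]
  -- common finisher
  have hfin : ∀ (μ : Fin r₁ → ℝ) (lam : Fin r₂ → ℝ),
      κ * ((∑ i, μ i ^ 2) + ∑ j, lam j ^ 2) ≤ ∑ x, (lpc p' x) ^ 2 →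
      ‖(μ, lam)‖ ≤ Real.sqrt (d * B ^ 2 / κ) := by
    intro μ lam hq
    have hS : (∑ i, μ i ^ 2) + ∑ j, lam j ^ 2 ≤ d * B ^ 2 / κ := by
      rw [le_div_iff₀ hκ]; nlinarith
    have hμs : (0:ℝ) ≤ ∑ i, μ i ^ 2 := Finset.sum_nonneg fun _ _ => sq_nonneg _
    have hls : (0:ℝ) ≤ ∑ j, lam j ^ 2 := Finset.sum_nonneg fun _ _ => sq_nonneg _
    have hμ : ‖μ‖ ≤ Real.sqrt (d * B ^ 2 / κ) := by
      rw [pi_norm_le_iff_of_nonneg (Real.sqrt_nonneg _)]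
      intro i
      have h1 : μ i ^ 2 ≤ ∑ i, μ i ^ 2 :=
        Finset.single_le_sum (f := fun i => μ i ^ 2) (fun _ _ => sq_nonneg _)
          (Finset.mem_univ i)
      have : μ i ^ 2 ≤ d * B ^ 2 / κ := by linarith
      simpa [Real.norm_eq_abs] using Real.abs_le_sqrt this
    have hl : ‖lam‖ ≤ Real.sqrt (d * B ^ 2 / κ) := by
      rw [pi_norm_le_iff_of_nonneg (Real.sqrt_nonneg _)]
      intro j
      have h1 : lam j ^ 2 ≤ ∑ j, lam j ^ 2 :=
        Finset.single_le_sum (f := fun j => lam j ^ 2) (fun _ _ => sq_nonneg _)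
          (Finset.mem_univ j)
      have : lam j ^ 2 ≤ d * B ^ 2 / κ := by linarith
      simpa [Real.norm_eq_abs] using Real.abs_le_sqrt this
    rw [Prod.norm_def]
    exact max_le hμ hl
  constructor
  · -- minimization
    intro θ μ lam hk
    obtain ⟨hfeas, hint, hlam, hcs, hstat⟩ := hk
    have hst : ∀ x, lpc p' x = -((∑ i, μ i * lpE p' i x) + ∑ j, lam j * lpA p' j x) := by
      intro x; linarith [hstat x]
    have hopt : IsOptMin Θ p' θ := ⟨hfeas, kkt_opt hfeas hlam hcs hst⟩
    have hθeq : θ = θm := hθmu θ hopt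
    have hlicq : LICQ p' θ κ := hθeq ▸ hθml
    have hsupp : ∀ j, dotp (lpA p' j) θ ≠ lpb p' j → lam j = 0 := by
      intro j hj
      have := hcs j
      rcases mul_eq_zero.1 this with h | h
      · exact h
      · exact absurd (sub_eq_zero.1 h) hj
    exact hfin μ lam (licq_bound hlicq hsupp hst)
  · -- maximization
    intro θ μ lam hk
    obtain ⟨hfeas, hint, hlam, hcs, hstat⟩ := hk
    set c : Fin d → ℝ := fun x => -lpc p' x with hcdef
    have hst : ∀ x, c x = -((∑ i, μ i * lpE p' i x) + ∑ j, lam j * lpA p' j x) := by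
      intro x; simp only [hcdef]; linarith [hstat x]
    have hdneg : ∀ v : Fin d → ℝ, dotp c v = -dotp (lpc p') v := by
      intro v; simp [dotp, hcdef, neg_mul, Finset.sum_neg_distrib]
    have hopt : IsOptMax Θ p' θ := by
      refine ⟨hfeas, fun θ' hθ' => ?_⟩
      have := kkt_opt hfeas hlam hcs hst θ' hθ'
      rw [hdneg, hdneg] at this
      linarith
    have hθeq : θ = θM := hθMu θ hopt
    have hlicq : LICQ p' θ κ := hθeq ▸ hθMl
    have hsupp : ∀ j, dotp (lpA p' j) θ ≠ lpb p' j → lam j = 0 := by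
      intro j hj
      have := hcs j
      rcases mul_eq_zero.1 this with h | h
      · exact h
      · exact absurd (sub_eq_zero.1 h) hj
    have hb := licq_bound hlicq hsupp hst
    have hceq : ∑ x, (c x) ^ 2 = ∑ x, (lpc p' x) ^ 2 := by
      refine Finset.sum_congr rfl fun x _ => ?_
      simp [hcdef]
    exact hfin μ lam (hceq ▸ hb)
end

section
/- Comparison of minimum values over nearby compact sets (deterministic core of Lemma A.4(ii)). Let S₁ and S₂ be nonempty compact subsets of ℝ^d and let f, g: ℝ^d → ℝ be continuous. Then |min_{θ ∈ S₁} f(θ) − min_{θ ∈ S₂} g(θ)| ≤ ω_f(d_H(S₁, S₂)) + sup_{θ ∈ S₂} |f(θ) − g(θ)|, where d_H(S₁, S₂) is the Hausdorff distance between S₁ and S₂ and ω_f(δ) = sup{ |f(θ) − f(θ')| : θ, θ' ∈ S₁ ∪ S₂, ‖θ − θ'‖ ≤ δ } is the modulus of continuity of f on S₁ ∪ S₂ at scale δ. -/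
/-- **Comparison of minimum values over nearby compact sets (deterministic core of
Lemma A.4(ii)).** For nonempty compact `S₁, S₂ ⊆ ℝ^d` and continuous `f, g`,
`|min_{S₁} f − min_{S₂} g| ≤ ω_f(d_H(S₁, S₂)) + sup_{S₂} |f − g|`, where `ω_f(δ)` is the
modulus of continuity of `f` on `S₁ ∪ S₂` at scale `δ` and `d_H` is the Hausdorff
distance. -/
theorem min_value_comparison {d : ℕ}
    (S₁ S₂ : Set (EuclideanSpace ℝ (Fin d)))
    (h1ne : S₁.Nonempty) (h2ne : S₂.Nonempty)
    (h1c : IsCompact S₁) (h2c : IsCompact S₂)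
    (f g : EuclideanSpace ℝ (Fin d) → ℝ)
    (hf : Continuous f) (hg : Continuous g) :
    |sInf (f '' S₁) - sInf (g '' S₂)| ≤
      sSup ((fun q : EuclideanSpace ℝ (Fin d) × EuclideanSpace ℝ (Fin d) => |f q.1 - f q.2|) ''
        {q : EuclideanSpace ℝ (Fin d) × EuclideanSpace ℝ (Fin d) |
          q.1 ∈ S₁ ∪ S₂ ∧ q.2 ∈ S₁ ∪ S₂ ∧ dist q.1 q.2 ≤ Metric.hausdorffDist S₁ S₂})
      + sSup ((fun θ => |f θ - g θ|) '' S₂) := by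
  set H := Metric.hausdorffDist S₁ S₂ with hH
  set P : Set (EuclideanSpace ℝ (Fin d) × EuclideanSpace ℝ (Fin d)) :=
    {q | q.1 ∈ S₁ ∪ S₂ ∧ q.2 ∈ S₁ ∪ S₂ ∧ dist q.1 q.2 ≤ H} with hP
  have hedist : EMetric.hausdorffEdist S₁ S₂ ≠ ⊤ :=
    Metric.hausdorffEdist_ne_top_of_nonempty_of_bounded h1ne h2ne h1c.isBounded h2c.isBounded
  -- P is compact
  have hPc : IsCompact P := by
    have : P = ((S₁ ∪ S₂) ×ˢ (S₁ ∪ S₂)) ∩ {q | dist q.1 q.2 ≤ H} := by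
      ext q; simp [hP, Set.mem_prod, and_assoc]; tauto
    rw [this]
    exact ((h1c.union h2c).prod (h1c.union h2c)).inter_right
      (isClosed_le (by fun_prop) continuous_const)
  have hωbdd : BddAbove ((fun q : EuclideanSpace ℝ (Fin d) × EuclideanSpace ℝ (Fin d) =>
      |f q.1 - f q.2|) '' P) :=
    (hPc.image (by fun_prop)).bddAbove
  have hDbdd : BddAbove ((fun θ => |f θ - g θ|) '' S₂) :=
    (h2c.image (by fun_prop)).bddAbove
  have hD : ∀ θ ∈ S₂, |f θ - g θ| ≤ sSup ((fun θ => |f θ - g θ|) '' S₂) := fun θ hθ =>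
    le_csSup hDbdd ⟨θ, hθ, rfl⟩
  have hω : ∀ a b : EuclideanSpace ℝ (Fin d), a ∈ S₁ ∪ S₂ → b ∈ S₁ ∪ S₂ → dist a b ≤ H →
      |f a - f b| ≤ sSup ((fun q : EuclideanSpace ℝ (Fin d) × EuclideanSpace ℝ (Fin d) =>
        |f q.1 - f q.2|) '' P) := fun a b ha hb hab =>
    le_csSup hωbdd ⟨(a, b), ⟨ha, hb, hab⟩, rfl⟩
  have hbd1 : BddBelow (f '' S₁) := (h1c.image hf).bddBelow
  have hbd2 : BddBelow (g '' S₂) := (h2c.image hg).bddBelow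
  -- minimizers
  obtain ⟨θ₁, hθ₁, hmin1⟩ := h1c.exists_isMinOn h1ne hf.continuousOn
  obtain ⟨θ₂, hθ₂, hmin2⟩ := h2c.exists_isMinOn h2ne hg.continuousOn
  have hm1 : sInf (f '' S₁) = f θ₁ :=
    le_antisymm (csInf_le hbd1 ⟨θ₁, hθ₁, rfl⟩)
      (le_csInf (h1ne.image f) (by rintro x ⟨y, hy, rfl⟩; exact hmin1 hy))
  have hm2 : sInf (g '' S₂) = g θ₂ :=
    le_antisymm (csInf_le hbd2 ⟨θ₂, hθ₂, rfl⟩)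
      (le_csInf (h2ne.image g) (by rintro x ⟨y, hy, rfl⟩; exact hmin2 hy))
  -- nearby points
  obtain ⟨θ₂', hθ₂', hd2⟩ := h2c.exists_infDist_eq_dist h2ne θ₁
  have hd2' : dist θ₁ θ₂' ≤ H := by
    rw [← hd2]; exact Metric.infDist_le_hausdorffDist_of_mem hθ₁ hedist
  obtain ⟨θ₁', hθ₁', hd1⟩ := h1c.exists_infDist_eq_dist h1ne θ₂
  have hd1' : dist θ₂' θ₁ ≤ H := by rw [dist_comm]; exact hd2'
  have hd1'' : dist θ₁' θ₂ ≤ H := by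
    rw [dist_comm, ← hd1]
    calc Metric.infDist θ₂ S₁ ≤ Metric.hausdorffDist S₂ S₁ :=
          Metric.infDist_le_hausdorffDist_of_mem hθ₂ (by rwa [EMetric.hausdorffEdist_comm])
      _ = H := Metric.hausdorffDist_comm ..
  rw [hm1, hm2, abs_sub_le_iff]
  constructor
  · -- f θ₁ - g θ₂ ≤ ω + D
    have h1 : f θ₁ ≤ f θ₁' := hmin1 hθ₁'
    have h2 : f θ₁' - f θ₂ ≤ |f θ₁' - f θ₂| := le_abs_self _
    have h3 := hω θ₁' θ₂ (Or.inl hθ₁') (Or.inr hθ₂) hd1''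
    have h4 : f θ₂ - g θ₂ ≤ |f θ₂ - g θ₂| := le_abs_self _
    have h5 := hD θ₂ hθ₂
    linarith
  · -- g θ₂ - f θ₁ ≤ ω + D
    have h1 : g θ₂ ≤ g θ₂' := hmin2 hθ₂'
    have h2 : g θ₂' - f θ₂' ≤ |f θ₂' - g θ₂'| := by rw [abs_sub_comm]; exact le_abs_self _
    have h3 := hD θ₂' hθ₂'
    have h4 : f θ₂' - f θ₁ ≤ |f θ₂' - f θ₁| := le_abs_self _
    have h5 := hω θ₂' θ₁ (Or.inr hθ₂') (Or.inl hθ₁) hd1'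
    linarith
end

section
/- Stability of the moment-inequality feasible set under sup-norm perturbation of the moments (deterministic core of Lemma A.4(i)). Let Θ ⊆ ℝ^d be compact, let m = (m₁,…,m_k): Θ → ℝ^k, and let Θ_I = {θ ∈ Θ : m_j(θ) ≤ 0 for all j} be nonempty. Assume the partial-identification condition holds with constants C, δ > 0: for every θ ∈ Θ, max_{1≤j≤k} max(m_j(θ), 0) ≥ C · min(δ, dist(θ, Θ_I)). Let m̂ = (m̂₁,…,m̂_k): Θ → ℝ^k satisfy sup_{θ ∈ Θ} max_{1≤j≤k} |m̂_j(θ) − m_j(θ)| ≤ η for some η with 0 ≤ η < Cδ. Then: (a) {θ ∈ Θ : m_j(θ) ≤ −η for all j} ⊆ {θ ∈ Θ : m̂_j(θ) ≤ 0 for all j} ⊆ {θ ∈ Θ : m_j(θ) ≤ η for all j}; and (b) every θ ∈ Θ with m̂_j(θ) ≤ 0 for all j satisfies dist(θ, Θ_I) ≤ η/C. -/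
/-- **Stability of the moment-inequality feasible set under sup-norm perturbation of the
moments (deterministic core of Lemma A.4(i)).** Let `Θ ⊆ ℝ^d` be compact,
`Θ_I = {θ ∈ Θ : m_j(θ) ≤ 0 ∀j}` nonempty, and assume the partial-identification condition
`max_j (m_j(θ))₊ ≥ C · min(δ, dist(θ, Θ_I))` on `Θ` (with `C, δ > 0`). If
`sup_Θ max_j |m̂_j − m_j| ≤ η` with `0 ≤ η < Cδ`, then
(a) `{m ≤ −η} ⊆ {m̂ ≤ 0} ⊆ {m ≤ η}` (within `Θ`), and
(b) every `θ ∈ Θ` with `m̂(θ) ≤ 0` satisfies `dist(θ, Θ_I) ≤ η/C`. -/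
theorem feasible_set_stability {d k : ℕ} (hk : 0 < k)
    (Θ : Set (EuclideanSpace ℝ (Fin d))) (hΘ : IsCompact Θ)
    (m mhat : EuclideanSpace ℝ (Fin d) → Fin k → ℝ)
    (C δ η : ℝ) (hC : 0 < C) (hδ : 0 < δ)
    (hne : {θ ∈ Θ | ∀ j, m θ j ≤ 0}.Nonempty)
    (hpi : ∀ θ ∈ Θ, ∃ j : Fin k,
      C * min δ (Metric.infDist θ {θ' ∈ Θ | ∀ j', m θ' j' ≤ 0}) ≤ max (m θ j) 0)
    (hη0 : 0 ≤ η) (hηδ : η < C * δ)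
    (happrox : ∀ θ ∈ Θ, ∀ j : Fin k, |mhat θ j - m θ j| ≤ η) :
    ({θ ∈ Θ | ∀ j, m θ j ≤ -η} ⊆ {θ ∈ Θ | ∀ j, mhat θ j ≤ 0} ∧
      {θ ∈ Θ | ∀ j, mhat θ j ≤ 0} ⊆ {θ ∈ Θ | ∀ j, m θ j ≤ η}) ∧
    (∀ θ ∈ Θ, (∀ j : Fin k, mhat θ j ≤ 0) →
      Metric.infDist θ {θ' ∈ Θ | ∀ j', m θ' j' ≤ 0} ≤ η / C) := by
  have key : ∀ θ ∈ Θ, (∀ j, mhat θ j ≤ 0) → ∀ j, m θ j ≤ η := by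
    intro θ hθ h j
    have := abs_le.mp (happrox θ hθ j)
    linarith [h j, this.1]
  refine ⟨⟨?_, ?_⟩, ?_⟩
  · rintro θ ⟨hθ, h⟩
    refine ⟨hθ, fun j => ?_⟩
    have := abs_le.mp (happrox θ hθ j)
    linarith [h j, this.2]
  · rintro θ ⟨hθ, h⟩
    exact ⟨hθ, key θ hθ h⟩
  · intro θ hθ h
    obtain ⟨j, hj⟩ := hpi θ hθ
    have hmη : m θ j ≤ η := key θ hθ h j
    have hmax : max (m θ j) 0 ≤ η := max_le hmη hη0
    have hmin : C * min δ (Metric.infDist θ {θ' ∈ Θ | ∀ j', m θ' j' ≤ 0}) ≤ η :=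
      le_trans hj hmax
    set D := Metric.infDist θ {θ' ∈ Θ | ∀ j', m θ' j' ≤ 0}
    rcases le_or_gt D δ with hd | hd
    · have : min δ D = D := min_eq_right hd
      rw [this] at hmin
      rw [le_div_iff₀ hC, mul_comm]
      exact hmin
    · exfalso
      have : min δ D = δ := min_eq_left hd.le
      rw [this] at hmin
      linarith
end
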